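/- arXiv:nlin/0701001 — 10 statements merged into one kernel-verified Lean document; each statement's English description precedes it below -/
import Mathlib

section
/- Suppose ψ satisfies the contiguous relations (re1)–(re4). Then ψ also satisfies, for all nonzero t, b₁, b₃ ∈ ℂ, the contiguous relation (re5): q·t·b₃·ψ(qt, b₁, qb₃) = ψ(t, b₁, b₃) − (1 − q·t·b₁·b₃)·ψ(t, b₁, qb₃). -/
theorem re5_of_contiguous_general (q : ℂ) (hq : q ≠ 0) (ψ : ℂ → ℂ → ℂ → ℂ)
    (hre2 : ∀ t b1 b3 : ℂ, t ≠ 0 → b1 ≠ 0 → b3 ≠ 0 →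
      b3 * ψ (q * t) b1 b3 = ψ t b1 b3 + (b3 - 1) * ψ t b1 (q * b3))
    (hre4 : ∀ t b1 b3 : ℂ, t ≠ 0 → b1 ≠ 0 → b3 ≠ 0 →
      q * t * ψ (q * t) b1 b3 = (q * t * b1 - 1) * ψ t b1 b3 + ψ (q * t) b1 (b3 / q)) :
    ∀ t b1 b3 : ℂ, t ≠ 0 → b1 ≠ 0 → b3 ≠ 0 →
      q * t * b3 * ψ (q * t) b1 (q * b3) =
        ψ t b1 b3 - (1 - q * t * b1 * b3) * ψ t b1 (q * b3) := by
  intro t b1 b3 ht hb1 hb3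
  have hre4_shifted := hre4 t b1 (q * b3) ht hb1 (mul_ne_zero hq hb3)
  rw [mul_div_cancel_left₀ b3 hq] at hre4_shifted
  linear_combination b3 * hre4_shifted + hre2 t b1 b3 ht hb1 hb3

theorem re5_of_contiguous (q : ℂ) (hq : q ≠ 0) (ψ : ℂ → ℂ → ℂ → ℂ)
    (hre1 : ∀ t b1 b3 : ℂ, t ≠ 0 → b1 ≠ 0 → b3 ≠ 0 →
      ψ (q * t) b1 b3 = b1 * ψ t b1 b3 + (1 - b1) * ψ (q * t) (b1 / q) b3)
    (hre2 : ∀ t b1 b3 : ℂ, t ≠ 0 → b1 ≠ 0 → b3 ≠ 0 →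
      b3 * ψ (q * t) b1 b3 = ψ t b1 b3 + (b3 - 1) * ψ t b1 (q * b3))
    (hre3 : ∀ t b1 b3 : ℂ, t ≠ 0 → b1 ≠ 0 → b3 ≠ 0 →
      q * t * b1 * b3 * ψ (q * t) b1 b3 = (q * t * b1 - 1) * ψ t b1 b3 + ψ t (q * b1) b3)
    (hre4 : ∀ t b1 b3 : ℂ, t ≠ 0 → b1 ≠ 0 → b3 ≠ 0 →
      q * t * ψ (q * t) b1 b3 = (q * t * b1 - 1) * ψ t b1 b3 + ψ (q * t) b1 (b3 / q)) :
    ∀ t b1 b3 : ℂ, t ≠ 0 → b1 ≠ 0 → b3 ≠ 0 →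
      q * t * b3 * ψ (q * t) b1 (q * b3) =
        ψ t b1 b3 - (1 - q * t * b1 * b3) * ψ t b1 (q * b3) :=
  re5_of_contiguous_general q hq ψ hre2 hre4
end

section
/- Suppose ψ satisfies the contiguous relations (re1)–(re4). Then ψ also satisfies, for all nonzero t, b₁, b₃ ∈ ℂ, the contiguous relation (re6): t·b₃·ψ(qt, b₁, b₃) = ψ(t/q, qb₁, b₃) − (1 − t)·ψ(t, b₁, b₃). -/
/-! Shifting `t ↦ t / q` in (re3) and (re4) and subtracting expresses `ψ (t / q) (q b₁) b₃` through
`ψ t b₁ b₃` and the lowered value `ψ t b₁ (b₃ / q)`; eliminating `ψ (q t) b₁ (b₃ / q)` between (re2)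
at `b₃ / q` and (re4) expresses that lowered value through `ψ (q t) b₁ b₃` and `ψ t b₁ b₃`. -/

section Contiguous

variable {q : ℂ} {ψ : ℂ → ℂ → ℂ → ℂ}

theorem contiguous_raise_b1_eq_lower_b3 (hq : q ≠ 0)
    (hre3 : ∀ t b1 b3 : ℂ, t ≠ 0 → b1 ≠ 0 → b3 ≠ 0 →
      q * t * b1 * b3 * ψ (q * t) b1 b3 = (q * t * b1 - 1) * ψ t b1 b3 + ψ t (q * b1) b3)
    (hre4 : ∀ t b1 b3 : ℂ, t ≠ 0 → b1 ≠ 0 → b3 ≠ 0 →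
      q * t * ψ (q * t) b1 b3 = (q * t * b1 - 1) * ψ t b1 b3 + ψ (q * t) b1 (b3 / q))
    {t b1 b3 : ℂ} (ht : t ≠ 0) (hb1 : b1 ≠ 0) (hb3 : b3 ≠ 0) :
    ψ (t / q) (q * b1) b3 = ψ t b1 (b3 / q) + t * (b1 * b3 - 1) * ψ t b1 b3 := by
  have hqt : q * (t / q) = t := mul_div_cancel₀ t hq
  have e3 := hre3 (t / q) b1 b3 (div_ne_zero ht hq) hb1 hb3
  have e4 := hre4 (t / q) b1 b3 (div_ne_zero ht hq) hb1 hb3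
  rw [hqt] at e3 e4
  linear_combination e4 - e3

theorem contiguous_lower_b3 (hq : q ≠ 0)
    (hre2 : ∀ t b1 b3 : ℂ, t ≠ 0 → b1 ≠ 0 → b3 ≠ 0 →
      b3 * ψ (q * t) b1 b3 = ψ t b1 b3 + (b3 - 1) * ψ t b1 (q * b3))
    (hre4 : ∀ t b1 b3 : ℂ, t ≠ 0 → b1 ≠ 0 → b3 ≠ 0 →
      q * t * ψ (q * t) b1 b3 = (q * t * b1 - 1) * ψ t b1 b3 + ψ (q * t) b1 (b3 / q))
    {t b1 b3 : ℂ} (ht : t ≠ 0) (hb1 : b1 ≠ 0) (hb3 : b3 ≠ 0) :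
    ψ t b1 (b3 / q) = t * b3 * ψ (q * t) b1 b3 - (t * b1 * b3 - 1) * ψ t b1 b3 := by
  have e2 := hre2 t b1 (b3 / q) ht hb1 (div_ne_zero hb3 hq)
  have e4 := hre4 t b1 b3 ht hb1 hb3
  rw [mul_div_cancel₀ b3 hq] at e2
  have hqq : q * q⁻¹ = 1 := mul_inv_cancel₀ hq
  linear_combination -(b3 / q) * e4 - e2
    + (t * b3 * ψ (q * t) b1 b3 - t * b1 * b3 * ψ t b1 b3) * hqq

end Contiguous

theorem re6_of_contiguous_general (q : ℂ) (hq : q ≠ 0) (ψ : ℂ → ℂ → ℂ → ℂ)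
    (hre2 : ∀ t b1 b3 : ℂ, t ≠ 0 → b1 ≠ 0 → b3 ≠ 0 →
      b3 * ψ (q * t) b1 b3 = ψ t b1 b3 + (b3 - 1) * ψ t b1 (q * b3))
    (hre3 : ∀ t b1 b3 : ℂ, t ≠ 0 → b1 ≠ 0 → b3 ≠ 0 →
      q * t * b1 * b3 * ψ (q * t) b1 b3 = (q * t * b1 - 1) * ψ t b1 b3 + ψ t (q * b1) b3)
    (hre4 : ∀ t b1 b3 : ℂ, t ≠ 0 → b1 ≠ 0 → b3 ≠ 0 →
      q * t * ψ (q * t) b1 b3 = (q * t * b1 - 1) * ψ t b1 b3 + ψ (q * t) b1 (b3 / q)) :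
    ∀ t b1 b3 : ℂ, t ≠ 0 → b1 ≠ 0 → b3 ≠ 0 →
      t * b3 * ψ (q * t) b1 b3 = ψ (t / q) (q * b1) b3 - (1 - t) * ψ t b1 b3 := by
  intro t b1 b3 ht hb1 hb3
  rw [contiguous_raise_b1_eq_lower_b3 hq hre3 hre4 ht hb1 hb3,
    contiguous_lower_b3 hq hre2 hre4 ht hb1 hb3]
  ring

theorem re6_of_contiguous (q : ℂ) (hq : q ≠ 0) (ψ : ℂ → ℂ → ℂ → ℂ)
    (hre1 : ∀ t b1 b3 : ℂ, t ≠ 0 → b1 ≠ 0 → b3 ≠ 0 →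
      ψ (q * t) b1 b3 = b1 * ψ t b1 b3 + (1 - b1) * ψ (q * t) (b1 / q) b3)
    (hre2 : ∀ t b1 b3 : ℂ, t ≠ 0 → b1 ≠ 0 → b3 ≠ 0 →
      b3 * ψ (q * t) b1 b3 = ψ t b1 b3 + (b3 - 1) * ψ t b1 (q * b3))
    (hre3 : ∀ t b1 b3 : ℂ, t ≠ 0 → b1 ≠ 0 → b3 ≠ 0 →
      q * t * b1 * b3 * ψ (q * t) b1 b3 = (q * t * b1 - 1) * ψ t b1 b3 + ψ t (q * b1) b3)
    (hre4 : ∀ t b1 b3 : ℂ, t ≠ 0 → b1 ≠ 0 → b3 ≠ 0 →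
      q * t * ψ (q * t) b1 b3 = (q * t * b1 - 1) * ψ t b1 b3 + ψ (q * t) b1 (b3 / q)) :
    ∀ t b1 b3 : ℂ, t ≠ 0 → b1 ≠ 0 → b3 ≠ 0 →
      t * b3 * ψ (q * t) b1 b3 = ψ (t / q) (q * b1) b3 - (1 - t) * ψ t b1 b3 :=
  re6_of_contiguous_general q hq ψ hre2 hre3 hre4
end

section
/- Suppose ψ satisfies the contiguous relations (re1)–(re4). Then for all nonzero t, b₁, b₃ ∈ ℂ one has t·b₁·b₃·ψ(qt, b₁, b₃) − (t·b₁²·b₃ + 1 − b₁)·ψ(t, b₁, b₃) = (1 − b₁)·(t·b₁ − 1)·ψ(t, b₁/q, b₃). -/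
theorem re8_of_contiguous_general (q : ℂ) (hq : q ≠ 0) (ψ : ℂ → ℂ → ℂ → ℂ)
    (hre1 : ∀ t b1 b3 : ℂ, t ≠ 0 → b1 ≠ 0 → b3 ≠ 0 →
      ψ (q * t) b1 b3 = b1 * ψ t b1 b3 + (1 - b1) * ψ (q * t) (b1 / q) b3)
    (hre3 : ∀ t b1 b3 : ℂ, t ≠ 0 → b1 ≠ 0 → b3 ≠ 0 →
      q * t * b1 * b3 * ψ (q * t) b1 b3 = (q * t * b1 - 1) * ψ t b1 b3 + ψ t (q * b1) b3) :
    ∀ t b1 b3 : ℂ, t ≠ 0 → b1 ≠ 0 → b3 ≠ 0 →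
      t * b1 * b3 * ψ (q * t) b1 b3 - (t * b1 ^ 2 * b3 + 1 - b1) * ψ t b1 b3 =
        (1 - b1) * (t * b1 - 1) * ψ t (b1 / q) b3 := by
  intro t b1 b3 ht hb1 hb3
  have hre3_div : t * b1 * b3 * ψ (q * t) (b1 / q) b3 =
      (t * b1 - 1) * ψ t (b1 / q) b3 + ψ t b1 b3 := by
    have h := hre3 t (b1 / q) b3 ht (div_ne_zero hb1 hq) hb3
    rwa [mul_div_cancel₀ b1 hq, show q * t * (b1 / q) = t * b1 by field_simp] at h
  -- (re1) and (re3) at `b1 / q` both involve `ψ (q * t) (b1 / q) b3`; eliminating it gives the claim.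
  linear_combination t * b1 * b3 * hre1 t b1 b3 ht hb1 hb3 + (1 - b1) * hre3_div

theorem re8_of_contiguous (q : ℂ) (hq : q ≠ 0) (ψ : ℂ → ℂ → ℂ → ℂ)
    (hre1 : ∀ t b1 b3 : ℂ, t ≠ 0 → b1 ≠ 0 → b3 ≠ 0 →
      ψ (q * t) b1 b3 = b1 * ψ t b1 b3 + (1 - b1) * ψ (q * t) (b1 / q) b3)
    (hre2 : ∀ t b1 b3 : ℂ, t ≠ 0 → b1 ≠ 0 → b3 ≠ 0 →
      b3 * ψ (q * t) b1 b3 = ψ t b1 b3 + (b3 - 1) * ψ t b1 (q * b3))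
    (hre3 : ∀ t b1 b3 : ℂ, t ≠ 0 → b1 ≠ 0 → b3 ≠ 0 →
      q * t * b1 * b3 * ψ (q * t) b1 b3 = (q * t * b1 - 1) * ψ t b1 b3 + ψ t (q * b1) b3)
    (hre4 : ∀ t b1 b3 : ℂ, t ≠ 0 → b1 ≠ 0 → b3 ≠ 0 →
      q * t * ψ (q * t) b1 b3 = (q * t * b1 - 1) * ψ t b1 b3 + ψ (q * t) b1 (b3 / q)) :
    ∀ t b1 b3 : ℂ, t ≠ 0 → b1 ≠ 0 → b3 ≠ 0 →
      t * b1 * b3 * ψ (q * t) b1 b3 - (t * b1 ^ 2 * b3 + 1 - b1) * ψ t b1 b3 =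
        (1 - b1) * (t * b1 - 1) * ψ t (b1 / q) b3 :=
  re8_of_contiguous_general q hq ψ hre1 hre3
end

section
/- (Riccati solution of the q-Painlevé equation of type A₄⁽¹⁾ with b₂ = 1.) Suppose ψ satisfies the contiguous relations (re1)–(re4), and fix nonzero b₁, b₃ ∈ ℂ such that ψ(t, b₁, qb₃) ≠ 0 for all nonzero t ∈ ℂ. Define f(t) = q·t·b₃·(1−b₁)·ψ(qt, b₁/q, qb₃)/ψ(t, b₁, qb₃) and g(t) = −ψ(t, b₁, b₃)/ψ(t, b₁, qb₃). Then for every nonzero t ∈ ℂ the pair (f, g) solves dP(A₄⁽¹⁾)[b₁, 1, b₃], i.e. g(qt)·g(t)·(f(t) + q·b₁·b₃·t) = q·t·(f(t) + b₃)·(f(t) + 1) and f(qt)·f(t)·(g(qt) + q·t) = q·b₁·b₃·t·(g(qt) + 1)·(g(qt) + 1/b₁). -/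
/-!
Write `u = ψ(·, b₁, b₃)` and `v = ψ(·, b₁, qb₃)`, so that `g = -u/v`. Relations (re1), (re4) and
(re2) give `v·f = u - v`, i.e. `f = -g - 1`: the solution lives on a line of the phase space.
Relations (re2) and (re4) then make `t ↦ u(t)/v(t)` satisfy a linear-fractional (discrete Riccati)
equation, `g(qt)·(f(t) + qtb₁b₃) = -qt·(f(t) + b₃)`, and on the line `f = -g - 1` both equations
of dP(A₄⁽¹⁾)[b₁, 1, b₃] are algebraic consequences of it.
-/

def ContiguousRe1 (q : ℂ) (ψ : ℂ → ℂ → ℂ → ℂ) : Prop :=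
  ∀ t b1 b3 : ℂ, t ≠ 0 → b1 ≠ 0 → b3 ≠ 0 →
    ψ (q * t) b1 b3 = b1 * ψ t b1 b3 + (1 - b1) * ψ (q * t) (b1 / q) b3

def ContiguousRe2 (q : ℂ) (ψ : ℂ → ℂ → ℂ → ℂ) : Prop :=
  ∀ t b1 b3 : ℂ, t ≠ 0 → b1 ≠ 0 → b3 ≠ 0 →
    b3 * ψ (q * t) b1 b3 = ψ t b1 b3 + (b3 - 1) * ψ t b1 (q * b3)

def ContiguousRe4 (q : ℂ) (ψ : ℂ → ℂ → ℂ → ℂ) : Prop :=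
  ∀ t b1 b3 : ℂ, t ≠ 0 → b1 ≠ 0 → b3 ≠ 0 →
    q * t * ψ (q * t) b1 b3 = (q * t * b1 - 1) * ψ t b1 b3 + ψ (q * t) b1 (b3 / q)

section Contiguous

variable {q : ℂ} {ψ : ℂ → ℂ → ℂ → ℂ} {t b1 b3 : ℂ}

theorem ContiguousRe4.apply_q_mul_b3 (h4 : ContiguousRe4 q ψ) (hq : q ≠ 0) (ht : t ≠ 0)
    (hb1 : b1 ≠ 0) (hb3 : b3 ≠ 0) :
    q * t * ψ (q * t) b1 (q * b3) = (q * t * b1 - 1) * ψ t b1 (q * b3) + ψ (q * t) b1 b3 := by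
  simpa only [mul_div_cancel_left₀ b3 hq] using h4 t b1 (q * b3) ht hb1 (mul_ne_zero hq hb3)

theorem mul_psi_div_eq_sub (h1 : ContiguousRe1 q ψ) (h2 : ContiguousRe2 q ψ)
    (h4 : ContiguousRe4 q ψ) (hq : q ≠ 0) (ht : t ≠ 0) (hb1 : b1 ≠ 0) (hb3 : b3 ≠ 0) :
    q * t * b3 * (1 - b1) * ψ (q * t) (b1 / q) (q * b3) = ψ t b1 b3 - ψ t b1 (q * b3) := by
  linear_combination (-(q * t * b3)) * h1 t b1 (q * b3) ht hb1 (mul_ne_zero hq hb3) +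
    b3 * h4.apply_q_mul_b3 hq ht hb1 hb3 + h2 t b1 b3 ht hb1 hb3

theorem psi_riccati (h2 : ContiguousRe2 q ψ) (h4 : ContiguousRe4 q ψ) (hq : q ≠ 0)
    (ht : t ≠ 0) (hb1 : b1 ≠ 0) (hb3 : b3 ≠ 0) :
    ψ (q * t) b1 b3 * (ψ t b1 b3 - ψ t b1 (q * b3) + q * t * b1 * b3 * ψ t b1 (q * b3)) =
      q * t * ψ (q * t) b1 (q * b3) * (ψ t b1 b3 - ψ t b1 (q * b3) + b3 * ψ t b1 (q * b3)) := by
  linear_combination (-(ψ t b1 b3 - ψ t b1 (q * b3) + b3 * ψ t b1 (q * b3))) *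
      h4.apply_q_mul_b3 hq ht hb1 hb3 + (q * t * b1 - 1) * ψ t b1 (q * b3) * h2 t b1 b3 ht hb1 hb3

end Contiguous

section Riccati

variable {q t b1 b3 f₀ f₁ g₀ g₁ : ℂ}

theorem dPA4_fst_of_riccati (hf₀ : f₀ = -g₀ - 1)
    (hric : g₁ * (f₀ + q * t * b1 * b3) = -(q * t * (f₀ + b3))) :
    g₁ * g₀ * (f₀ + q * b1 * b3 * t) = q * t * (f₀ + b3) * (f₀ + 1) := by
  linear_combination g₀ * hric - q * t * (f₀ + b3) * hf₀

theorem dPA4_snd_of_riccati (hb1 : b1 ≠ 0) (hf₁ : f₁ = -g₁ - 1)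
    (hric : g₁ * (f₀ + q * t * b1 * b3) = -(q * t * (f₀ + b3))) :
    f₁ * f₀ * (g₁ + q * t) = q * b1 * b3 * t * (g₁ + 1) * (g₁ + 1 / b1) := by
  rw [hf₁]
  field_simp
  linear_combination -(g₁ + 1) * hric

end Riccati

theorem riccati_solution_general (q : ℂ) (hq : q ≠ 0) (ψ : ℂ → ℂ → ℂ → ℂ)
    (hre1 : ∀ t b1 b3 : ℂ, t ≠ 0 → b1 ≠ 0 → b3 ≠ 0 →
      ψ (q * t) b1 b3 = b1 * ψ t b1 b3 + (1 - b1) * ψ (q * t) (b1 / q) b3)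
    (hre2 : ∀ t b1 b3 : ℂ, t ≠ 0 → b1 ≠ 0 → b3 ≠ 0 →
      b3 * ψ (q * t) b1 b3 = ψ t b1 b3 + (b3 - 1) * ψ t b1 (q * b3))
    (hre4 : ∀ t b1 b3 : ℂ, t ≠ 0 → b1 ≠ 0 → b3 ≠ 0 →
      q * t * ψ (q * t) b1 b3 = (q * t * b1 - 1) * ψ t b1 b3 + ψ (q * t) b1 (b3 / q))
    (b1 b3 : ℂ) (hb1 : b1 ≠ 0) (hb3 : b3 ≠ 0)
    (hpsi : ∀ t : ℂ, t ≠ 0 → ψ t b1 (q * b3) ≠ 0)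
    (f g : ℂ → ℂ)
    (hf : ∀ t : ℂ, t ≠ 0 →
      f t = q * t * b3 * (1 - b1) * ψ (q * t) (b1 / q) (q * b3) / ψ t b1 (q * b3))
    (hg : ∀ t : ℂ, t ≠ 0 → g t = -(ψ t b1 b3 / ψ t b1 (q * b3))) :
    ∀ t : ℂ, t ≠ 0 →
      g (q * t) * g t * (f t + q * b1 * b3 * t) = q * t * (f t + b3) * (f t + 1) ∧
      f (q * t) * f t * (g (q * t) + q * t) =
        q * b1 * b3 * t * (g (q * t) + 1) * (g (q * t) + 1 / b1) := by
  intro t ht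
  have hqt : q * t ≠ 0 := mul_ne_zero hq ht
  have hf_eq : ∀ s : ℂ, s ≠ 0 → f s = -g s - 1 := fun s hs => by
    rw [hf s hs, hg s hs, mul_psi_div_eq_sub hre1 hre2 hre4 hq hs hb1 hb3]
    field_simp [hpsi s hs]
  have hric : g (q * t) * (f t + q * t * b1 * b3) = -(q * t * (f t + b3)) := by
    rw [hf_eq t ht, hg t ht, hg (q * t) hqt]
    field_simp [hpsi t ht, hpsi (q * t) hqt]
    linear_combination -psi_riccati hre2 hre4 hq ht hb1 hb3
  exact ⟨dPA4_fst_of_riccati (hf_eq t ht) hric, dPA4_snd_of_riccati hb1 (hf_eq _ hqt) hric⟩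

theorem riccati_solution (q : ℂ) (hq : q ≠ 0) (ψ : ℂ → ℂ → ℂ → ℂ)
    (hre1 : ∀ t b1 b3 : ℂ, t ≠ 0 → b1 ≠ 0 → b3 ≠ 0 →
      ψ (q * t) b1 b3 = b1 * ψ t b1 b3 + (1 - b1) * ψ (q * t) (b1 / q) b3)
    (hre2 : ∀ t b1 b3 : ℂ, t ≠ 0 → b1 ≠ 0 → b3 ≠ 0 →
      b3 * ψ (q * t) b1 b3 = ψ t b1 b3 + (b3 - 1) * ψ t b1 (q * b3))
    (hre3 : ∀ t b1 b3 : ℂ, t ≠ 0 → b1 ≠ 0 → b3 ≠ 0 →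
      q * t * b1 * b3 * ψ (q * t) b1 b3 = (q * t * b1 - 1) * ψ t b1 b3 + ψ t (q * b1) b3)
    (hre4 : ∀ t b1 b3 : ℂ, t ≠ 0 → b1 ≠ 0 → b3 ≠ 0 →
      q * t * ψ (q * t) b1 b3 = (q * t * b1 - 1) * ψ t b1 b3 + ψ (q * t) b1 (b3 / q))
    (b1 b3 : ℂ) (hb1 : b1 ≠ 0) (hb3 : b3 ≠ 0)
    (hpsi : ∀ t : ℂ, t ≠ 0 → ψ t b1 (q * b3) ≠ 0)
    (f g : ℂ → ℂ)
    (hf : ∀ t : ℂ, t ≠ 0 →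
      f t = q * t * b3 * (1 - b1) * ψ (q * t) (b1 / q) (q * b3) / ψ t b1 (q * b3))
    (hg : ∀ t : ℂ, t ≠ 0 → g t = -(ψ t b1 b3 / ψ t b1 (q * b3))) :
    ∀ t : ℂ, t ≠ 0 →
      g (q * t) * g t * (f t + q * b1 * b3 * t) = q * t * (f t + b3) * (f t + 1) ∧
      f (q * t) * f t * (g (q * t) + q * t) =
        q * b1 * b3 * t * (g (q * t) + 1) * (g (q * t) + 1 / b1) :=
  riccati_solution_general q hq ψ hre1 hre2 hre4 b1 b3 hb1 hb3 hpsi f g hf hg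
end

section
/- Let q ∈ ℂ with 0 < |q| < 1, and for a ∈ ℂ and n ∈ ℕ write (a;q)ₙ = ∏_{k=0}^{n−1}(1 − a·qᵏ). For nonzero b₁ ∈ ℂ, b₃ ∈ ℂ, and t ∈ ℂ with |q·t·b₁| < 1, define ψ(t, b₁, b₃) = ∑_{n=0}^{∞} (1/b₁;q)ₙ·(b₃;q)ₙ/(q;q)ₙ · (q·t·b₁)ⁿ (the basic hypergeometric series ₂φ₁[1/b₁, b₃; 0; q, qtb₁]; the series converges absolutely for |qtb₁| < 1). Then ψ satisfies the four contiguous relations at every such point (t, b₁, b₃): (re1) ψ(qt,b₁,b₃) = b₁·ψ(t,b₁,b₃) + (1−b₁)·ψ(qt,b₁/q,b₃); (re2) b₃·ψ(qt,b₁,b₃) = ψ(t,b₁,b₃) + (b₃−1)·ψ(t,b₁,qb₃); (re3) q·t·b₁·b₃·ψ(qt,b₁,b₃) = (q·t·b₁−1)·ψ(t,b₁,b₃) + ψ(t,qb₁,b₃); (re4) q·t·ψ(qt,b₁,b₃) = (q·t·b₁−1)·ψ(t,b₁,b₃) + ψ(qt,b₁,b₃/q). -/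
/-!
Write `φ(a, b; x) = qHyp q a b x = ∑ₙ (a;q)ₙ (b;q)ₙ / (q;q)ₙ · xⁿ`, so that
`ψ(t, b₁, b₃) = φ(1/b₁, b₃; qtb₁)`; `φ` is symmetric in `a, b`.
All four relations are instances of two identities of `φ`:

* `a φ(a, b; qx) = φ(a, b; x) + (a - 1) φ(qa, b; x)`, termwise from
  `(a;q)ₙ (aqⁿ - 1) = (a - 1)(qa;q)ₙ` (both sides are `-(a;q)ₙ₊₁`);
* `x b φ(qc, b; qx) = (x - 1) φ(qc, b; x) + φ(c, b; qx)`, which holds coefficientwise once the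
  last two series are shifted by one index, using `(c;q)ₙ₊₁ = (1 - c)(qc;q)ₙ`.

(re1), (re3) take `a = 1/b₁`, `c = 1/(qb₁)`; (re2), (re4) are the same with the upper parameters
exchanged.
-/

open Filter Topology

/-- The q-Pochhammer symbol `(a;q)ₙ = ∏_{k=0}^{n-1} (1 - a qᵏ)`. -/
noncomputable def qPoch (q a : ℂ) (n : ℕ) : ℂ := ∏ k ∈ Finset.range n, (1 - a * q ^ k)

/-- The basic hypergeometric series
`ψ(t,b₁,b₃) = ₂φ₁[1/b₁, b₃; 0; q, q t b₁] = ∑_n (1/b₁;q)ₙ (b₃;q)ₙ / (q;q)ₙ · (q t b₁)ⁿ`. -/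
noncomputable def psiHG (q t b1 b3 : ℂ) : ℂ :=
  ∑' n : ℕ, qPoch q (1 / b1) n * qPoch q b3 n / qPoch q q n * (q * t * b1) ^ n

lemma qPoch_succ (q a : ℂ) (n : ℕ) : qPoch q a (n + 1) = qPoch q a n * (1 - a * q ^ n) :=
  Finset.prod_range_succ _ _

lemma qPoch_succ' (q a : ℂ) (n : ℕ) : qPoch q a (n + 1) = (1 - a) * qPoch q (q * a) n := by
  simp only [qPoch, Finset.prod_range_succ', pow_succ', pow_zero, mul_one]
  rw [mul_comm]
  congr 1
  exact Finset.prod_congr rfl fun k _ => by ring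

lemma qPoch_mul_sub_one (q a : ℂ) (n : ℕ) :
    qPoch q a n * (a * q ^ n - 1) = (a - 1) * qPoch q (q * a) n := by
  linear_combination qPoch_succ q a n - qPoch_succ' q a n

noncomputable def qHypCoeff (q a b : ℂ) (n : ℕ) : ℂ := qPoch q a n * qPoch q b n / qPoch q q n

noncomputable def qHyp (q a b x : ℂ) : ℂ := ∑' n, qHypCoeff q a b n * x ^ n

lemma psiHG_eq_qHyp (q t b1 b3 : ℂ) : psiHG q t b1 b3 = qHyp q (1 / b1) b3 (q * t * b1) := rfl

lemma qHyp_comm (q a b x : ℂ) : qHyp q a b x = qHyp q b a x := by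
  simp only [qHyp, qHypCoeff, mul_comm (qPoch q a _)]

lemma qHypCoeff_zero (q a b : ℂ) : qHypCoeff q a b 0 = 1 := by
  simp [qHypCoeff, qPoch]

lemma qHypCoeff_succ (q a b : ℂ) (n : ℕ) :
    qHypCoeff q a b (n + 1) =
      qHypCoeff q a b n * ((1 - a * q ^ n) * (1 - b * q ^ n) / (1 - q ^ (n + 1))) := by
  simp only [qHypCoeff, qPoch_succ, ← pow_succ', div_eq_mul_inv, mul_inv]
  ring

lemma qHypCoeff_succ' (q c b : ℂ) (n : ℕ) :
    qHypCoeff q c b (n + 1) =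
      qHypCoeff q (q * c) b n * ((1 - c) * (1 - b * q ^ n) / (1 - q ^ (n + 1))) := by
  rw [qHypCoeff, qHypCoeff, qPoch_succ' q c, qPoch_succ q b, qPoch_succ q q, ← pow_succ']
  simp only [div_eq_mul_inv, mul_inv]
  ring

lemma qHypCoeff_contiguous_upper (q a b : ℂ) (n : ℕ) :
    a * q ^ n * qHypCoeff q a b n = qHypCoeff q a b n + (a - 1) * qHypCoeff q (q * a) b n := by
  simp only [qHypCoeff]
  linear_combination qPoch q b n / qPoch q q n * qPoch_mul_sub_one q a n

lemma qHypCoeff_contiguous_shift (q c b : ℂ) {n : ℕ} (hq : q ^ (n + 1) ≠ 1) :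
    b * q ^ n * qHypCoeff q (q * c) b n =
      qHypCoeff q (q * c) b n - qHypCoeff q (q * c) b (n + 1)
        + q ^ (n + 1) * qHypCoeff q c b (n + 1) := by
  have hden : 1 - q ^ (n + 1) ≠ 0 := sub_ne_zero.mpr hq.symm
  rw [qHypCoeff_succ, qHypCoeff_succ']
  field_simp
  ring

lemma summable_qHyp (q a b : ℂ) {x : ℂ} (hq : ‖q‖ < 1) (hx : ‖x‖ < 1) :
    Summable fun n => qHypCoeff q a b n * x ^ n := by
  have hpow : Tendsto (fun n : ℕ => q ^ n) atTop (𝓝 0) :=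
    tendsto_pow_atTop_nhds_zero_of_norm_lt_one hq
  have hratio : Tendsto (fun n : ℕ => (1 - a * q ^ n) * (1 - b * q ^ n) / (1 - q ^ (n + 1)))
      atTop (𝓝 1) := by
    have h1 : Tendsto (fun _ : ℕ => (1 : ℂ)) atTop (𝓝 1) := tendsto_const_nhds
    simpa [Pi.div_def] using ((h1.sub (hpow.const_mul a)).mul (h1.sub (hpow.const_mul b))).div
      (h1.sub (hpow.comp (tendsto_add_atTop_nat 1))) (by norm_num)
  obtain ⟨r, hxr, hr⟩ := exists_between hx
  refine summable_of_ratio_norm_eventually_le hr ?_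
  filter_upwards [(hratio.norm.mul_const ‖x‖).eventually_lt_const (by simpa using hxr)] with n hn
  calc ‖qHypCoeff q a b (n + 1) * x ^ (n + 1)‖
      = ‖(1 - a * q ^ n) * (1 - b * q ^ n) / (1 - q ^ (n + 1))‖ * ‖x‖ *
          ‖qHypCoeff q a b n * x ^ n‖ := by
        rw [qHypCoeff_succ, pow_succ x n]
        simp only [norm_mul]
        ring
    _ ≤ r * ‖qHypCoeff q a b n * x ^ n‖ := by gcongr

lemma qHyp_contiguous_upper (q a b : ℂ) {x : ℂ} (hq : ‖q‖ < 1) (hx : ‖x‖ < 1) :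
    a * qHyp q a b (q * x) = qHyp q a b x + (a - 1) * qHyp q (q * a) b x := by
  rw [qHyp, qHyp, qHyp, ← tsum_mul_left, ← tsum_mul_left,
    ← (summable_qHyp q a b hq hx).tsum_add ((summable_qHyp q (q * a) b hq hx).mul_left _)]
  refine tsum_congr fun n => ?_
  linear_combination x ^ n * qHypCoeff_contiguous_upper q a b n

lemma qHyp_contiguous_shift (q c b : ℂ) {x : ℂ} (hq : ‖q‖ < 1) (hx : ‖x‖ < 1) :
    x * b * qHyp q (q * c) b (q * x) = (x - 1) * qHyp q (q * c) b x + qHyp q c b (q * x) := by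
  set A := fun n => qHypCoeff q (q * c) b n * x ^ n
  set C := fun n => qHypCoeff q c b n * (q * x) ^ n
  have hqx : ‖q * x‖ < 1 := by
    rw [norm_mul]; exact mul_lt_one_of_nonneg_of_lt_one_left (norm_nonneg q) hq hx.le
  have hA := (summable_qHyp q (q * c) b hq hx).hasSum
  have hC := (summable_qHyp q c b hq hqx).hasSum
  have hsum := ((hA.mul_left x).sub ((hasSum_nat_add_iff' 1).mpr hA)).add
    ((hasSum_nat_add_iff' 1).mpr hC)
  have hterm (n : ℕ) :
      x * b * (qHypCoeff q (q * c) b n * (q * x) ^ n) = x * A n - A (n + 1) + C (n + 1) := by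
    have hqn : q ^ (n + 1) ≠ 1 := ne_of_apply_ne norm <| by
      rw [norm_pow, norm_one]; exact (pow_lt_one₀ (norm_nonneg q) hq n.succ_ne_zero).ne
    linear_combination x ^ (n + 1) * qHypCoeff_contiguous_shift q c b hqn
  rw [qHyp, ← tsum_mul_left, tsum_congr hterm, hsum.tsum_eq]
  simp only [Finset.range_one, Finset.sum_singleton, qHypCoeff_zero, pow_zero, mul_one, qHyp]
  ring

theorem psiHG_contiguous (q : ℂ) (hq0 : 0 < ‖q‖) (hq1 : ‖q‖ < 1) :
    ∀ t b1 b3 : ℂ, t ≠ 0 → b1 ≠ 0 → b3 ≠ 0 → ‖q * t * b1‖ < 1 →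
      (psiHG q (q * t) b1 b3 =
          b1 * psiHG q t b1 b3 + (1 - b1) * psiHG q (q * t) (b1 / q) b3) ∧
      (b3 * psiHG q (q * t) b1 b3 =
          psiHG q t b1 b3 + (b3 - 1) * psiHG q t b1 (q * b3)) ∧
      (q * t * b1 * b3 * psiHG q (q * t) b1 b3 =
          (q * t * b1 - 1) * psiHG q t b1 b3 + psiHG q t (q * b1) b3) ∧
      (q * t * psiHG q (q * t) b1 b3 =
          (q * t * b1 - 1) * psiHG q t b1 b3 + psiHG q (q * t) b1 (b3 / q)) := by
  intro t b1 b3 _ hb1 _ hx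
  have hq : q ≠ 0 := norm_pos_iff.mp hq0
  simp only [psiHG_eq_qHyp]
  rw [show q * (q * t) * b1 = q * (q * t * b1) by ring,
    show q * (q * t) * (b1 / q) = q * t * b1 by field_simp,
    show 1 / (b1 / q) = q * (1 / b1) by field_simp,
    show q * t * (q * b1) = q * (q * t * b1) by ring]
  refine ⟨?_, ?_, ?_, ?_⟩
  · have h := qHyp_contiguous_upper q (1 / b1) b3 hq1 hx
    field_simp at h ⊢
    linear_combination h
  · have h := qHyp_contiguous_upper q b3 (1 / b1) hq1 hx
    rw [qHyp_comm q b3, qHyp_comm q b3, qHyp_comm q (q * b3)] at h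
    exact h
  · have h := qHyp_contiguous_shift q (1 / (q * b1)) b3 hq1 hx
    rw [show q * (1 / (q * b1)) = 1 / b1 by field_simp] at h
    linear_combination h
  · have h := qHyp_contiguous_shift q (b3 / q) (1 / b1) hq1 hx
    rw [mul_div_cancel₀ b3 hq, qHyp_comm q b3, qHyp_comm q b3, qHyp_comm q (b3 / q)] at h
    field_simp at h ⊢
    linear_combination h
end

section
/- (Bilinear equation bl1.) Suppose ψ satisfies the contiguous relations (re1)–(re4), and fix nonzero t, b₁, b₃ ∈ ℂ such that qʲ·b₁ ≠ 1, qʲ·t·b₁ ≠ 1 and qʲ·b₃ ≠ 1 for every integer j. Then for every integer N ≥ 0: (1 − q^{−N}·b₁)·τ_N^{0,1}(t)·τ_{N+1}^{−1,1}(qt) + q^{−N}·b₁·τ_N^{−1,1}(qt)·τ_{N+1}^{0,1}(t) − q^{−N}·τ_N^{−1,1}(t)·τ_{N+1}^{0,1}(qt) = 0. -/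
/-!
Let `u_j = (ψ(t, q^{-j} b₁, q^{i+1} b₃))_i` and let `w_j` be the same vector at `qt`, so that
the `τ^{·,1}` are determinants of consecutive `u_j` or `w_j` (as rows, after transposing).
Relation (re1) reads `w_j = a_j u_j + (1 - a_j) w_{j+1}` with `a_j = q^{-j} b₁`; eliminating
`w_k, …, w_{k+m-1}` one after the other from `det(w_k, …, w_{k+m})` leaves
`(∏ a) · det(u_k, …, u_{k+m-1}, w_{k+m})`. Bordering the `N × N` determinants with the last
unit vector `e`, all six determinants in bl1 become, up to common factors, brackets
`[V, x, y] = det(V, x, y)` with `V = (u_1, …, u_{N-1})` and `x, y ∈ {u_0, u_N, w_N, e}`, and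
bl1 is the three-term Plücker relation between these brackets.
-/
/-- `τ_N(t,b₁,b₃) = det(ψ(t, q^{1-j} b₁, q^{i-1} b₃))_{i,j=1,…,N}` (and `τ₀ = 1`,
which is the determinant of the empty matrix). -/
noncomputable def tau (q : ℂ) (ψ : ℂ → ℂ → ℂ → ℂ) (N : ℕ) (t b1 b3 : ℂ) : ℂ :=
  Matrix.det (Matrix.of fun i j : Fin N => ψ t (q ^ (-(j : ℤ)) * b1) (q ^ (i : ℤ) * b3))

/-- `τ_N^{m,n}(t) = τ_N(t, qᵐ b₁, qⁿ b₃)`. -/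
noncomputable def tauS (q : ℂ) (ψ : ℂ → ℂ → ℂ → ℂ) (N : ℕ) (m n : ℤ) (t b1 b3 : ℂ) : ℂ :=
  tau q ψ N t (q ^ m * b1) (q ^ n * b3)

open Matrix Fin

namespace Matrix

variable {R : Type*} [CommRing R] {n : ℕ}

noncomputable def pluckerBracket (V : Fin n → Fin (n + 2) → R) (x : Fin (n + 2) → R) :
    (Fin (n + 2) → R) →ₗ[R] R :=
  (detRowAlternating : (Fin (n + 2) → R) [⋀^Fin (n + 2)]→ₗ[R] R).toMultilinearMap.curryRight
    (snoc V x)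

section PluckerBracket

variable (V : Fin n → Fin (n + 2) → R)

theorem pluckerBracket_apply (x y : Fin (n + 2) → R) :
    pluckerBracket V x y = (of (snoc (snoc V x) y)).det :=
  rfl

theorem pluckerBracket_self (x : Fin (n + 2) → R) : pluckerBracket V x x = 0 :=
  det_zero_of_row_eq (i := castSucc (last n)) (j := last (n + 1)) (castSucc_lt_last _).ne
    (by simp)

theorem pluckerBracket_row (x : Fin (n + 2) → R) (i : Fin n) :
    pluckerBracket V x (V i) = 0 :=
  det_zero_of_row_eq (i := castSucc (castSucc i)) (j := last (n + 1)) (castSucc_lt_last _).ne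
    (by simp)

theorem pluckerBracket_swap (x y : Fin (n + 2) → R) :
    pluckerBracket V y x = -pluckerBracket V x y := by
  have := (detRowAlternating : (Fin (n + 2) → R) [⋀^Fin (n + 2)]→ₗ[R] R).map_swap
    (snoc (snoc V x) y) (castSucc_lt_last (last n)).ne
  change detRowAlternating _ = -detRowAlternating _
  rw [← this]
  congr 1
  funext i
  refine lastCases ?_ (fun i => lastCases ?_ (fun i => ?_) i) i
  · simp
  · simp
  · rw [Function.comp_apply, Equiv.swap_apply_of_ne_of_ne
      (castSucc_lt_castSucc_iff.2 (castSucc_lt_last i)).ne (castSucc_lt_last _).ne]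
    simp

end PluckerBracket

theorem det_eq_zero_of_forall_row_mem {K ι : Type*} [Field K] [Fintype ι] [DecidableEq ι]
    (M : Matrix ι ι K) {W : Submodule K (ι → K)} (hW : W ≠ ⊤) (h : ∀ i, M i ∈ W) :
    M.det = 0 := by
  by_contra hdet
  apply hW
  rw [eq_top_iff, ← (linearIndependent_rows_of_det_ne_zero hdet).span_eq_top_of_card_eq_finrank'
    (by simp)]
  exact Submodule.span_le.2 (Set.range_subset_iff.2 h)

/- Either `V, p, q, r` span the whole space, and the expression is a linear form in `s` vanishing
on all of them, or they do not, and then already the brackets among `p, q, r` vanish. -/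
theorem pluckerBracket_plucker_relation {K : Type*} [Field K] (V : Fin n → Fin (n + 2) → K)
    (p q r s : Fin (n + 2) → K) :
    pluckerBracket V p q * pluckerBracket V r s - pluckerBracket V p r * pluckerBracket V q s
      + pluckerBracket V p s * pluckerBracket V q r = 0 := by
  set W := Submodule.span K (Set.range (snoc (snoc (snoc V p) q) r))
  by_cases hW : W = ⊤
  · have hF : pluckerBracket V p q • pluckerBracket V r - pluckerBracket V p r • pluckerBracket V q
        + pluckerBracket V q r • pluckerBracket V p = 0 := by
      refine LinearMap.ext_on_range hW fun i => ?_
      simp only [LinearMap.add_apply, LinearMap.sub_apply, LinearMap.smul_apply, smul_eq_mul,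
        LinearMap.zero_apply]
      refine lastCases ?_ (fun i => lastCases ?_ (fun i => lastCases ?_ (fun i => ?_) i) i) i
      · simp only [snoc_last, pluckerBracket_self]
        ring
      · simp only [snoc_last, snoc_castSucc, pluckerBracket_self, pluckerBracket_swap V q r]
        ring
      · simp only [snoc_last, snoc_castSucc, pluckerBracket_self, pluckerBracket_swap V p r,
          pluckerBracket_swap V p q]
        ring
      · simp only [snoc_castSucc, pluckerBracket_row]
        ring
    have hFs := LinearMap.congr_fun hF s
    simp only [LinearMap.add_apply, LinearMap.sub_apply, LinearMap.smul_apply, smul_eq_mul,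
      LinearMap.zero_apply] at hFs
    linear_combination hFs
  · have hmem : ∀ i, (snoc (snoc (snoc V p) q) r : Fin (n + 3) → Fin (n + 2) → K) i ∈ W :=
      fun i => Submodule.subset_span (Set.mem_range_self i)
    have hB : ∀ x ∈ W, ∀ y ∈ W, pluckerBracket V x y = 0 := fun x hx y hy =>
      det_eq_zero_of_forall_row_mem _ hW fun i => by
        refine lastCases ?_ (fun i => lastCases ?_ (fun i => ?_) i) i
        · simpa using hy
        · simpa using hx
        · simpa using hmem (castSucc (castSucc (castSucc i)))
    have hp : p ∈ W := by simpa using hmem (castSucc (castSucc (last n)))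
    have hq : q ∈ W := by simpa using hmem (castSucc (last (n + 1)))
    have hr : r ∈ W := by simpa using hmem (last (n + 2))
    rw [hB p hp q hq, hB p hp r hr, hB q hq r hr]
    ring

theorem det_snoc_cons_eq_pluckerBracket (V : Fin n → Fin (n + 2) → R) (x y : Fin (n + 2) → R) :
    (of (snoc (cons x V) y)).det = (-1) ^ n * pluckerBracket V x y := by
  have hσ : snoc (snoc V x) y = snoc (cons x V) y ∘ (castSucc (last n)).cycleRange := by
    rw [← cons_snoc_eq_snoc_cons, cons_comp_cycleRange, eq_comm, insertNth_eq_iff]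
    refine ⟨by simp, funext fun i => ?_⟩
    refine lastCases ?_ (fun i => ?_) i <;> simp [removeNth]
  rw [pluckerBracket_apply, hσ]
  change _ = _ * ((of (snoc (cons x V) y)).submatrix _ id).det
  rw [det_permute, sign_cycleRange, ← mul_assoc]
  simp [← pow_add, ← two_mul, pow_mul]

theorem det_snoc_single_last (v : Fin n → Fin (n + 1) → R) :
    (of (snoc v (Pi.single (last n) 1))).det = (of fun i => v i ∘ castSucc).det := by
  rw [det_succ_row _ (last n),
    Finset.sum_eq_single (last n) (fun j _ hj => by simp [hj]) (by simp)]
  simp only [val_last, ← two_mul, pow_mul, even_two, Even.neg_pow, one_pow, of_apply, snoc_last,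
    Pi.single_eq_same, mul_one, succAbove_last, one_mul]
  congr 1
  ext i j
  simp

end Matrix

theorem AlternatingMap.map_eq_prod_smul_map_snoc {R M N : Type*} [CommRing R] [AddCommGroup M]
    [Module R M] [AddCommGroup N] [Module R N] (m : ℕ) (f : M [⋀^Fin (m + 1)]→ₗ[R] N)
    (u w : ℕ → M) (a : ℕ → R) (h : ∀ j, w j = a j • u j + (1 - a j) • w (j + 1)) :
    f (fun i => w i) = (∏ j ∈ Finset.range m, a j) • f (snoc (fun i : Fin m => u i) (w m)) := by
  induction m generalizing u w a with
  | zero =>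
    rw [Finset.prod_range_zero, one_smul]
    congr 1
    funext i
    rw [Fin.fin_one_eq_zero i]
    rfl
  | succ m ih =>
    -- Of `w 0 = a 0 • u 0 + (1 - a 0) • w 1` only `a 0 • u 0` survives, `w 1` being the next row.
    have hw : (fun i : Fin (m + 2) => w i) = vecCons (w 0) (fun i : Fin (m + 1) => w (i + 1)) :=
      (cons_self_tail _).symm
    have hu : snoc (fun i : Fin (m + 1) => u i) (w (m + 1))
        = vecCons (u 0) (snoc (fun i : Fin m => u (i + 1)) (w (m + 1))) := by
      rw [vecCons, cons_snoc_eq_snoc_cons]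
      exact congrArg (snoc · _) (cons_self_tail _).symm
    have hzero : f.curryLeft (w 1) (fun i : Fin (m + 1) => w (i + 1)) = 0 :=
      f.map_eq_zero_of_eq _ (i := 0) (j := 1) rfl (by simp)
    rw [hw, hu, ← f.curryLeft_apply_apply, ← f.curryLeft_apply_apply, h 0, map_add, map_smul,
      map_smul, AlternatingMap.add_apply, AlternatingMap.smul_apply, AlternatingMap.smul_apply,
      zero_add, hzero, smul_zero, add_zero,
      ih _ (fun j => u (j + 1)) (fun j => w (j + 1)) (fun j => a (j + 1)) (fun j => h (j + 1)),
      smul_smul, Finset.prod_range_succ']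
    simp only [mul_comm]

section Contiguous

variable {K : Type*} [Field K] {n : ℕ} (u w : ℕ → Fin (n + 2) → K) (a : ℕ → K)

theorem det_eq_prod_mul_pluckerBracket (hrel : ∀ j, w j = a j • u j + (1 - a j) • w (j + 1)) :
    (of fun j : Fin (n + 2) => w j).det = (∏ j ∈ Finset.range (n + 1), a j)
      * ((-1) ^ n * pluckerBracket (fun i : Fin n => u (i + 1)) (u 0) (w (n + 1))) := by
  have hcons : cons (u 0) (fun i : Fin n => u (i + 1)) = fun j : Fin (n + 1) => u j :=
    cons_self_tail fun j : Fin (n + 1) => u j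
  rw [← det_snoc_cons_eq_pluckerBracket, hcons]
  exact detRowAlternating.map_eq_prod_smul_map_snoc (n + 1) u w a hrel

theorem one_sub_mul_det_eq_prod_mul_pluckerBracket
    (hrel : ∀ j, w j = a j • u j + (1 - a j) • w (j + 1)) :
    (1 - a (n + 1)) * (of fun j : Fin (n + 2) => w (j + 1)).det
      = (∏ j ∈ Finset.range (n + 1), a (j + 1))
        * pluckerBracket (fun i : Fin n => u (i + 1)) (u (n + 1)) (w (n + 1)) := by
  have hsnoc : snoc (fun i : Fin n => u (i + 1)) (u (n + 1)) = fun j : Fin (n + 1) => u (j + 1) :=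
    snoc_init_self fun j : Fin (n + 1) => u (j + 1)
  have hlast : pluckerBracket (fun i : Fin n => u (i + 1)) (u (n + 1)) (w (n + 1))
      = (1 - a (n + 1)) * pluckerBracket (fun i : Fin n => u (i + 1)) (u (n + 1)) (w (n + 2)) := by
    rw [hrel (n + 1), map_add, map_smul, map_smul, pluckerBracket_self, smul_zero, zero_add,
      smul_eq_mul]
  rw [hlast, mul_left_comm, pluckerBracket_apply, hsnoc]
  congr 1
  exact detRowAlternating.map_eq_prod_smul_map_snoc (n + 1) (fun j => u (j + 1))
    (fun j => w (j + 1)) (fun j => a (j + 1)) (fun j => hrel (j + 1))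

theorem det_castSucc_eq_prod_mul_pluckerBracket
    (hrel : ∀ j, w j = a j • u j + (1 - a j) • w (j + 1)) :
    (of fun j : Fin (n + 1) => w (j + 1) ∘ castSucc).det = (∏ j ∈ Finset.range n, a (j + 1))
      * pluckerBracket (fun i : Fin n => u (i + 1)) (w (n + 1)) (Pi.single (last (n + 1)) 1) := by
  let T := (detRowAlternating : (Fin (n + 1) → K) [⋀^Fin (n + 1)]→ₗ[K] K).compLinearMap
    (LinearMap.funLeft K K castSucc)
  rw [pluckerBracket_apply, det_snoc_single_last]
  exact T.map_eq_prod_smul_map_snoc n (fun j => u (j + 1)) (fun j => w (j + 1))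
    (fun j => a (j + 1)) (fun j => hrel (j + 1))

theorem det_bilinear_of_contiguous (hrel : ∀ j, w j = a j • u j + (1 - a j) • w (j + 1))
    (Q : K) (hQ : Q * a 0 = a (n + 1)) :
    (1 - a (n + 1)) * (of fun j : Fin (n + 1) => u j ∘ castSucc).det
        * (of fun j : Fin (n + 2) => w (j + 1)).det
      + a (n + 1) * (of fun j : Fin (n + 1) => w (j + 1) ∘ castSucc).det
        * (of fun j : Fin (n + 2) => u j).det
      - Q * (of fun j : Fin (n + 1) => u (j + 1) ∘ castSucc).det
        * (of fun j : Fin (n + 2) => w j).det = 0 := by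
  set V : Fin n → Fin (n + 2) → K := fun i => u (i + 1)
  set e : Fin (n + 2) → K := Pi.single (last (n + 1)) 1
  set P := ∏ j ∈ Finset.range n, a (j + 1)
  have hcons : (fun j : Fin (n + 1) => u j) = cons (u 0) V := (cons_self_tail _).symm
  have hsnoc : (fun j : Fin (n + 1) => u (j + 1)) = snoc V (u (n + 1)) := (snoc_init_self _).symm
  have hτa :
      (of fun j : Fin (n + 1) => u j ∘ castSucc).det = (-1) ^ n * pluckerBracket V (u 0) e := by
    rw [← det_snoc_single_last, hcons, det_snoc_cons_eq_pluckerBracket]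
  have hτb :
      (of fun j : Fin (n + 2) => u j).det = (-1) ^ n * pluckerBracket V (u 0) (u (n + 1)) := by
    rw [← snoc_init_self (fun j : Fin (n + 2) => u j)]
    change (of (snoc (fun j : Fin (n + 1) => u j) (u (n + 1)))).det = _
    rw [hcons, det_snoc_cons_eq_pluckerBracket]
  have hτf :
      (of fun j : Fin (n + 1) => u (j + 1) ∘ castSucc).det = pluckerBracket V (u (n + 1)) e := by
    rw [← det_snoc_single_last, hsnoc]
    rfl
  have hτd := one_sub_mul_det_eq_prod_mul_pluckerBracket u w a hrel
  rw [Finset.prod_range_succ] at hτd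
  rw [hτa, hτb, hτf, det_castSucc_eq_prod_mul_pluckerBracket u w a hrel,
    det_eq_prod_mul_pluckerBracket u w a hrel, Finset.prod_range_succ']
  linear_combination (-1) ^ n * pluckerBracket V (u 0) e * hτd
    + (-1) ^ n * P * a (n + 1) * pluckerBracket_plucker_relation V (u 0) (u (n + 1)) (w (n + 1)) e
    - (-1) ^ n * P * pluckerBracket V (u (n + 1)) e * pluckerBracket V (u 0) (w (n + 1)) * hQ

end Contiguous

section Tau

variable (q : ℂ) (ψ : ℂ → ℂ → ℂ → ℂ) (b1 b3 : ℂ)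

noncomputable def tauColumn (s : ℂ) (j : ℕ) {m : ℕ} : Fin m → ℂ :=
  fun i => ψ s (q ^ (-(j : ℤ)) * b1) (q ^ ((i : ℤ) + 1) * b3)

variable {q}

theorem tauS_eq_det_tauColumn (hq : q ≠ 0) (m k : ℕ) (s : ℂ) :
    tauS q ψ m (-k) 1 s b1 b3 = (of fun j : Fin m => tauColumn q ψ b1 b3 s (j + k)).det := by
  rw [tauS, tau, ← det_transpose]
  congr 1
  ext j i
  simp only [transpose_apply, of_apply, tauColumn]
  rw [← mul_assoc, ← mul_assoc, ← zpow_add₀ hq, ← zpow_add₀ hq]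
  push_cast
  ring_nf

theorem tauColumn_contiguous (hq : q ≠ 0)
    (hre1 : ∀ t b1 b3 : ℂ, t ≠ 0 → b1 ≠ 0 → b3 ≠ 0 →
      ψ (q * t) b1 b3 = b1 * ψ t b1 b3 + (1 - b1) * ψ (q * t) (b1 / q) b3)
    {t : ℂ} (ht : t ≠ 0) (hb1 : b1 ≠ 0) (hb3 : b3 ≠ 0) (m j : ℕ) :
    (tauColumn q ψ b1 b3 (q * t) j : Fin m → ℂ) = (q ^ (-(j : ℤ)) * b1) • tauColumn q ψ b1 b3 t j
      + (1 - q ^ (-(j : ℤ)) * b1) • tauColumn q ψ b1 b3 (q * t) (j + 1) := by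
  funext i
  have hdiv : q ^ (-(j : ℤ)) * b1 / q = q ^ (-((j + 1 : ℕ) : ℤ)) * b1 := by
    rw [Nat.cast_succ, neg_add, zpow_add₀ hq, _root_.zpow_neg_one]
    ring
  simp only [Pi.add_apply, Pi.smul_apply, smul_eq_mul, tauColumn, ← hdiv]
  exact hre1 t _ _ ht (mul_ne_zero (zpow_ne_zero _ hq) hb1) (mul_ne_zero (zpow_ne_zero _ hq) hb3)

theorem tauS_bilinear_of_contiguous (hq : q ≠ 0) (t : ℂ)
    (hcontig : ∀ m j : ℕ, (tauColumn q ψ b1 b3 (q * t) j : Fin m → ℂ)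
      = (q ^ (-(j : ℤ)) * b1) • tauColumn q ψ b1 b3 t j
        + (1 - q ^ (-(j : ℤ)) * b1) • tauColumn q ψ b1 b3 (q * t) (j + 1)) (N : ℕ) :
    (1 - q ^ (-(N : ℤ)) * b1) * tauS q ψ N 0 1 t b1 b3 * tauS q ψ (N + 1) (-1) 1 (q * t) b1 b3
      + q ^ (-(N : ℤ)) * b1 * tauS q ψ N (-1) 1 (q * t) b1 b3 * tauS q ψ (N + 1) 0 1 t b1 b3
      - q ^ (-(N : ℤ)) * tauS q ψ N (-1) 1 t b1 b3 * tauS q ψ (N + 1) 0 1 (q * t) b1 b3 = 0 := by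
  have hτ₀ (m : ℕ) (s : ℂ) :
      tauS q ψ m 0 1 s b1 b3 = (of fun j : Fin m => tauColumn q ψ b1 b3 s j).det := by
    simpa using tauS_eq_det_tauColumn ψ b1 b3 hq m 0 s
  have hτ₁ (m : ℕ) (s : ℂ) :
      tauS q ψ m (-1) 1 s b1 b3 = (of fun j : Fin m => tauColumn q ψ b1 b3 s (j + 1)).det := by
    simpa using tauS_eq_det_tauColumn ψ b1 b3 hq m 1 s
  cases N with
  | zero =>
    rw [zero_add]
    have hrel := congrFun (hcontig 1 0) 0
    simp only [Pi.add_apply, Pi.smul_apply, smul_eq_mul, Nat.cast_zero, neg_zero, zpow_zero,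
      one_mul, zero_add] at hrel
    simp only [hτ₀, hτ₁, det_fin_zero, det_fin_one, of_apply, Fin.val_zero, Nat.cast_zero,
      neg_zero, zpow_zero, one_mul, mul_one, zero_add]
    linear_combination -hrel
  | succ n =>
    simp only [hτ₀, hτ₁]
    exact det_bilinear_of_contiguous (fun j => tauColumn q ψ b1 b3 t j)
      (fun j => tauColumn q ψ b1 b3 (q * t) j) (fun j => q ^ (-(j : ℤ)) * b1) (hcontig (n + 2))
      _ (by simp)

end Tau

theorem bilinear_bl1_general (q : ℂ) (hq : q ≠ 0) (ψ : ℂ → ℂ → ℂ → ℂ)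
    (hre1 : ∀ t b1 b3 : ℂ, t ≠ 0 → b1 ≠ 0 → b3 ≠ 0 →
      ψ (q * t) b1 b3 = b1 * ψ t b1 b3 + (1 - b1) * ψ (q * t) (b1 / q) b3)
    (t b1 b3 : ℂ) (ht : t ≠ 0) (hb1 : b1 ≠ 0) (hb3 : b3 ≠ 0) :
    ∀ N : ℕ,
      (1 - q ^ (-(N : ℤ)) * b1) * tauS q ψ N 0 1 t b1 b3 * tauS q ψ (N + 1) (-1) 1 (q * t) b1 b3
        + q ^ (-(N : ℤ)) * b1 * tauS q ψ N (-1) 1 (q * t) b1 b3 * tauS q ψ (N + 1) 0 1 t b1 b3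
        - q ^ (-(N : ℤ)) * tauS q ψ N (-1) 1 t b1 b3 * tauS q ψ (N + 1) 0 1 (q * t) b1 b3 = 0 :=
  tauS_bilinear_of_contiguous ψ b1 b3 hq t (tauColumn_contiguous ψ b1 b3 hq hre1 ht hb1 hb3)

theorem bilinear_bl1 (q : ℂ) (hq : q ≠ 0) (ψ : ℂ → ℂ → ℂ → ℂ)
    (hre1 : ∀ t b1 b3 : ℂ, t ≠ 0 → b1 ≠ 0 → b3 ≠ 0 →
      ψ (q * t) b1 b3 = b1 * ψ t b1 b3 + (1 - b1) * ψ (q * t) (b1 / q) b3)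
    (hre2 : ∀ t b1 b3 : ℂ, t ≠ 0 → b1 ≠ 0 → b3 ≠ 0 →
      b3 * ψ (q * t) b1 b3 = ψ t b1 b3 + (b3 - 1) * ψ t b1 (q * b3))
    (hre3 : ∀ t b1 b3 : ℂ, t ≠ 0 → b1 ≠ 0 → b3 ≠ 0 →
      q * t * b1 * b3 * ψ (q * t) b1 b3 = (q * t * b1 - 1) * ψ t b1 b3 + ψ t (q * b1) b3)
    (hre4 : ∀ t b1 b3 : ℂ, t ≠ 0 → b1 ≠ 0 → b3 ≠ 0 →
      q * t * ψ (q * t) b1 b3 = (q * t * b1 - 1) * ψ t b1 b3 + ψ (q * t) b1 (b3 / q))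
    (t b1 b3 : ℂ) (ht : t ≠ 0) (hb1 : b1 ≠ 0) (hb3 : b3 ≠ 0)
    (hgen1 : ∀ j : ℤ, q ^ j * b1 ≠ 1)
    (hgen2 : ∀ j : ℤ, q ^ j * t * b1 ≠ 1)
    (hgen3 : ∀ j : ℤ, q ^ j * b3 ≠ 1) :
    ∀ N : ℕ,
      (1 - q ^ (-(N : ℤ)) * b1) * tauS q ψ N 0 1 t b1 b3 * tauS q ψ (N + 1) (-1) 1 (q * t) b1 b3
        + q ^ (-(N : ℤ)) * b1 * tauS q ψ N (-1) 1 (q * t) b1 b3 * tauS q ψ (N + 1) 0 1 t b1 b3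
        - q ^ (-(N : ℤ)) * tauS q ψ N (-1) 1 t b1 b3 * tauS q ψ (N + 1) 0 1 (q * t) b1 b3 = 0 :=
  bilinear_bl1_general q hq ψ hre1 t b1 b3 ht hb1 hb3
end

section
/- (Difference formula cp-1.) Suppose ψ satisfies the contiguous relation (re1). Fix integers m, n and an integer N ≥ 1, and nonzero t, b₁, b₃ ∈ ℂ with q^{m−k}·b₁ ≠ 1 for k = 0, …, N−2. Let A be the N×N matrix whose (i,1) entry is ψ(t, qᵐ·b₁, q^{n+i−1}·b₃) and whose (i,j) entry for 2 ≤ j ≤ N is ψ(t/q, q^{m−j+2}·b₁, q^{n+i−1}·b₃). Then det A = [∏_{k=0}^{N−2}(q^{m−k}·b₁ − 1)] / (q^{(N−1)(2m−N+2)/2}·b₁^{N−1}) · τ_N^{m,n}(t). -/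
/-! Writing `β k = q ^ (m - k) * b₁`, the relation (re1) taken at `t / q` expresses
`ψ (t / q) (β k)` as `β k⁻¹ • ψ t (β k) + (1 - β k⁻¹) • ψ t (β (k + 1))`. So every column of `A`
but the first is a combination of two adjacent columns of the matrix of `τ_N^{m,n}(t)`, i.e.
`A = T * U` with `U` upper bidiagonal, and `det U = ∏ (1 - β k⁻¹)`. The prefactor follows from
`∏_{k < N-1} β k = q ^ ((N - 1)(2m - N + 2) / 2) * b₁ ^ (N - 1)`. -/

open Finset

namespace Matrix

variable {R : Type*} [CommRing R] {N : ℕ}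

def upperBidiagonal (c d : Fin N → R) : Matrix (Fin N) (Fin N) R :=
  of fun k j => if k = j then c j else if (k : ℕ) + 1 = j then d k else 0

theorem isUpperTriangular_upperBidiagonal (c d : Fin N → R) :
    (upperBidiagonal c d).IsUpperTriangular := by
  intro k j hjk
  have hjk : (j : ℕ) < k := hjk
  simp only [upperBidiagonal, of_apply, Fin.ext_iff]
  rw [if_neg (by omega), if_neg (by omega)]

theorem det_upperBidiagonal (c d : Fin N → R) : (upperBidiagonal c d).det = ∏ j, c j := by
  rw [det_of_isUpperTriangular (isUpperTriangular_upperBidiagonal c d)]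
  simp [upperBidiagonal]

theorem mul_upperBidiagonal_apply_zero (T : Matrix (Fin (N + 1)) (Fin (N + 1)) R)
    (c d : Fin (N + 1) → R) (i : Fin (N + 1)) : (T * upperBidiagonal c d) i 0 = T i 0 * c 0 := by
  rw [mul_apply, Fintype.sum_eq_single 0]
  · simp [upperBidiagonal]
  · intro k hk
    simp [upperBidiagonal, hk]

theorem mul_upperBidiagonal_apply_succ (T : Matrix (Fin (N + 1)) (Fin (N + 1)) R)
    (c d : Fin (N + 1) → R) (i : Fin (N + 1)) (j : Fin N) :
    (T * upperBidiagonal c d) i j.succ =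
      T i j.succ * c j.succ + T i j.castSucc * d j.castSucc := by
  rw [mul_apply, Fintype.sum_eq_add j.succ j.castSucc Fin.castSucc_lt_succ.ne']
  · simp [upperBidiagonal, Fin.ext_iff]
  · rintro k ⟨hk, hk'⟩
    simp only [upperBidiagonal, of_apply, if_neg hk]
    rw [if_neg (by simp [Fin.ext_iff] at hk' ⊢; omega), mul_zero]

theorem det_eq_prod_mul_det_of_col_eq (A T : Matrix (Fin (N + 1)) (Fin (N + 1)) R)
    (c d : Fin (N + 1) → R) (h0 : ∀ i, A i 0 = T i 0 * c 0)
    (hsucc : ∀ i (j : Fin N), A i j.succ = T i j.succ * c j.succ + T i j.castSucc * d j.castSucc) :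
    A.det = (∏ j, c j) * T.det := by
  have hA : A = T * upperBidiagonal c d := by
    ext i j
    cases j using Fin.cases with
    | zero => rw [h0, mul_upperBidiagonal_apply_zero]
    | succ j => rw [hsucc, mul_upperBidiagonal_apply_succ]
  rw [hA, det_mul, det_upperBidiagonal, mul_comm]

end Matrix

theorem prod_zpow_eq_zpow_sum {G : Type*} [CommGroupWithZero G] {q : G} (hq : q ≠ 0)
    {ι : Type*} (s : Finset ι) (f : ι → ℤ) : ∏ i ∈ s, q ^ f i = q ^ ∑ i ∈ s, f i := by
  induction s using Finset.cons_induction with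
  | empty => simp
  | cons a s ha ih => rw [prod_cons, sum_cons, ih, zpow_add₀ hq]

theorem sum_range_sub_eq (m : ℤ) (M : ℕ) :
    ∑ k ∈ range M, (m - k) = M * (2 * m - M + 1) / 2 := by
  refine (Int.ediv_eq_of_eq_mul_left two_ne_zero ?_).symm
  induction M with
  | zero => simp
  | succ M ih => rw [sum_range_succ, add_mul, ← ih]; push_cast; ring

theorem prod_range_sub_one_div_zpow_mul {K : Type*} [Field K] {q : K} (hq : q ≠ 0) (m : ℤ)
    (b : K) (M : ℕ) :
    ∏ k ∈ range M, (q ^ (m - (k : ℤ)) * b - 1) / (q ^ (m - (k : ℤ)) * b) =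
      (∏ k ∈ range M, (q ^ (m - (k : ℤ)) * b - 1)) /
        (q ^ (∑ k ∈ range M, (m - (k : ℤ))) * b ^ M) := by
  rw [prod_div_distrib, prod_mul_distrib, prod_const, card_range, prod_zpow_eq_zpow_sum hq]

section Contiguous

variable {K : Type*} [Field K] {q : K} {ψ : K → K → K → K}

theorem apply_div_eq_of_contiguous (hq : q ≠ 0)
    (hre1 : ∀ t b1 b3 : K, t ≠ 0 → b1 ≠ 0 → b3 ≠ 0 →
      ψ (q * t) b1 b3 = b1 * ψ t b1 b3 + (1 - b1) * ψ (q * t) (b1 / q) b3)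
    {t b b3 : K} (ht : t ≠ 0) (hb : b ≠ 0) (hb3 : b3 ≠ 0) :
    ψ (t / q) b b3 = ψ t (b / q) b3 * ((b - 1) / b) + ψ t b b3 * b⁻¹ := by
  have h := hre1 (t / q) b b3 (div_ne_zero ht hq) hb hb3
  rw [mul_div_cancel₀ t hq] at h
  field_simp
  linear_combination -h

end Contiguous

theorem tau_eq_det {q : ℂ} (hq : q ≠ 0) (ψ : ℂ → ℂ → ℂ → ℂ) (N : ℕ) (t b1 b3 : ℂ) (m n : ℤ) :
    tau q ψ N t (q ^ m * b1) (q ^ n * b3) =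
      (Matrix.of fun i j : Fin N => ψ t (q ^ (m - j) * b1) (q ^ (n + i) * b3)).det := by
  simp only [tau, ← mul_assoc, ← zpow_add₀ hq, neg_add_eq_sub, add_comm n]

theorem difference_formula_cp1_general (q : ℂ) (hq : q ≠ 0) (ψ : ℂ → ℂ → ℂ → ℂ)
    (hre1 : ∀ t b1 b3 : ℂ, t ≠ 0 → b1 ≠ 0 → b3 ≠ 0 →
      ψ (q * t) b1 b3 = b1 * ψ t b1 b3 + (1 - b1) * ψ (q * t) (b1 / q) b3)
    (m n : ℤ) (N : ℕ) (hN : 1 ≤ N)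
    (t b1 b3 : ℂ) (ht : t ≠ 0) (hb1 : b1 ≠ 0) (hb3 : b3 ≠ 0) :
    Matrix.det (Matrix.of fun i j : Fin N =>
        if (j : ℕ) = 0 then ψ t (q ^ m * b1) (q ^ (n + (i : ℤ)) * b3)
        else ψ (t / q) (q ^ (m - (j : ℤ) + 1) * b1) (q ^ (n + (i : ℤ)) * b3)) =
      (∏ k ∈ Finset.range (N - 1), (q ^ (m - (k : ℤ)) * b1 - 1)) /
          (q ^ ((((N : ℤ) - 1) * (2 * m - (N : ℤ) + 2)) / 2) * b1 ^ (N - 1)) *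
        tau q ψ N t (q ^ m * b1) (q ^ n * b3) := by
  obtain ⟨M, rfl⟩ := Nat.exists_eq_add_of_le' hN
  set β : ℕ → ℂ := fun k => q ^ (m - k) * b1
  have hβq (k : ℕ) : β k / q = β (k + 1) := by
    simp only [β, Nat.cast_succ, sub_add_eq_sub_sub, zpow_sub_one₀ hq]; ring
  rw [tau_eq_det hq, Matrix.det_eq_prod_mul_det_of_col_eq _
    (Matrix.of fun i j : Fin (M + 1) => ψ t (β j) (q ^ (n + (i : ℤ)) * b3))
    (Fin.cons 1 fun j : Fin M => (β j - 1) / β j) (fun j => (β j)⁻¹) (fun i => by simp [β])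
    fun i j => ?_]
  · rw [Nat.add_sub_cancel, Fin.prod_univ_succ, Fin.cons_zero, one_mul]
    simp only [Fin.cons_succ]
    rw [Fin.prod_univ_eq_prod_range (fun k => (β k - 1) / β k),
      prod_range_sub_one_div_zpow_mul hq, sum_range_sub_eq]
    congr 5
    push_cast
    ring
  · simp only [Matrix.of_apply, Fin.val_succ, Fin.val_castSucc, Fin.cons_succ,
      if_neg (Nat.succ_ne_zero _)]
    rw [show m - ((j + 1 : ℕ) : ℤ) + 1 = m - j by push_cast; ring, ← hβq]
    exact apply_div_eq_of_contiguous hq hre1 ht (mul_ne_zero (zpow_ne_zero _ hq) hb1)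
      (mul_ne_zero (zpow_ne_zero _ hq) hb3)

theorem difference_formula_cp1 (q : ℂ) (hq : q ≠ 0) (ψ : ℂ → ℂ → ℂ → ℂ)
    (hre1 : ∀ t b1 b3 : ℂ, t ≠ 0 → b1 ≠ 0 → b3 ≠ 0 →
      ψ (q * t) b1 b3 = b1 * ψ t b1 b3 + (1 - b1) * ψ (q * t) (b1 / q) b3)
    (m n : ℤ) (N : ℕ) (hN : 1 ≤ N)
    (t b1 b3 : ℂ) (ht : t ≠ 0) (hb1 : b1 ≠ 0) (hb3 : b3 ≠ 0)
    (hgen : ∀ k : ℕ, (k : ℤ) ≤ (N : ℤ) - 2 → q ^ (m - k) * b1 ≠ 1) :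
    Matrix.det (Matrix.of fun i j : Fin N =>
        if (j : ℕ) = 0 then ψ t (q ^ m * b1) (q ^ (n + (i : ℤ)) * b3)
        else ψ (t / q) (q ^ (m - (j : ℤ) + 1) * b1) (q ^ (n + (i : ℤ)) * b3)) =
      (∏ k ∈ Finset.range (N - 1), (q ^ (m - (k : ℤ)) * b1 - 1)) /
          (q ^ ((((N : ℤ) - 1) * (2 * m - (N : ℤ) + 2)) / 2) * b1 ^ (N - 1)) *
        tau q ψ N t (q ^ m * b1) (q ^ n * b3) :=
  difference_formula_cp1_general q hq ψ hre1 m n N hN t b1 b3 ht hb1 hb3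
end

section
/- (Difference formula cp-2.) Suppose ψ satisfies the contiguous relation (re1). Fix integers m, n and an integer N ≥ 2, and nonzero t, b₁, b₃ ∈ ℂ with q^{m−k}·b₁ ≠ 1 for k = 1, …, N−2. Let B be the N×N matrix whose (i,1) entry is ψ(t/q, qᵐ·b₁, q^{n+i−1}·b₃), whose (i,2) entry is ψ(t, q^{m−1}·b₁, q^{n+i−1}·b₃), and whose (i,j) entry for 3 ≤ j ≤ N is ψ(t/q, q^{m−j+2}·b₁, q^{n+i−1}·b₃). Then det B = [∏_{k=1}^{N−2}(q^{m−k}·b₁ − 1)] / (q^{(N−1)(2m−N+2)/2}·b₁^{N−1}) · τ_N^{m,n}(t). -/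
open Matrix Finset

theorem Matrix.det_updateCol_smul_add_smul_col {R n : Type*} [CommRing R] [Fintype n]
    [DecidableEq n] (A : Matrix n n R) {i j : n} (hij : i ≠ j) (a b : R) (x : n → R) :
    det (A.updateCol i (a • x + b • fun k => A k j)) = a * det (A.updateCol i x) := by
  have h := det_updateCol_add_smul_self (A.updateCol i (a • x)) hij b
  simp only [updateCol_self, updateCol_ne hij.symm, updateCol_idem] at h
  rw [← det_updateCol_smul]
  convert h using 3
  ext k
  simp

section ContiguousColumns

variable {R : Type*} {N : ℕ}

def mixedCols (U V : ℕ → Fin N → R) (s : ℕ) : Matrix (Fin N) (Fin N) R :=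
  of fun i j => if (j : ℕ) < s then U j i else V j i

def cp2Matrix (U V : ℕ → Fin N → R) : Matrix (Fin N) (Fin N) R :=
  of fun i j => if (j : ℕ) = 0 then U 0 i else if (j : ℕ) = 1 then V 1 i else U (j - 1) i

theorem cp2Matrix_submatrix_cycleIcc {M : ℕ} (U V : ℕ → Fin (M + 2) → R) :
    (cp2Matrix U V).submatrix id (Fin.cycleIcc 1 (Fin.last (M + 1))) =
      (mixedCols U V (M + 1)).updateCol (Fin.last (M + 1)) (V 1) := by
  ext i k
  rcases Fin.eq_zero_or_eq_succ k with rfl | ⟨k, rfl⟩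
  · rw [submatrix_apply, Fin.cycleIcc_of_lt Fin.zero_lt_one]
    simp [cp2Matrix, mixedCols]
  rcases Fin.eq_castSucc_or_eq_last k with ⟨k, rfl⟩ | rfl
  · have hk : (k.castSucc.succ : Fin (M + 2)) < Fin.last (M + 1) := by
      simp [Fin.lt_def]
    rw [submatrix_apply, id, Fin.cycleIcc_of_ge_of_lt (Fin.succ_pos _) hk, updateCol_ne hk.ne]
    have hval : ((k.castSucc.succ + 1 : Fin (M + 2)) : ℕ) = k + 2 := by
      rw [Fin.val_add_one_of_lt hk]; simp
    simp only [cp2Matrix, mixedCols, of_apply, hval, Fin.val_succ, Fin.val_castSucc]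
    simp
  · rw [submatrix_apply, id, ← Fin.succ_last, Fin.cycleIcc_of_last (Fin.succ_pos _)]
    simp [cp2Matrix]

variable [CommRing R] {U V : ℕ → Fin N → R} {c d : ℕ → R}

theorem det_mixedCols_eq_mul (hUV : ∀ j, V j = c j • U j + d j • V (j + 1)) {s : ℕ}
    (hs : s + 1 < N) :
    det (mixedCols U V s) = c s * det (mixedCols U V (s + 1)) := by
  have hupd : mixedCols U V s = (mixedCols U V (s + 1)).updateCol ⟨s, by omega⟩ (V s) := by
    ext i j
    rcases eq_or_ne j ⟨s, by omega⟩ with rfl | hj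
    · simp [mixedCols]
    · have hj' : (j : ℕ) ≠ s := fun h => hj (Fin.ext h)
      have hlt : (j : ℕ) < s + 1 ↔ (j : ℕ) < s := by omega
      simp only [mixedCols, updateCol_ne hj, of_apply, hlt]
  have hnext : V (s + 1) = fun i => mixedCols U V (s + 1) i ⟨s + 1, hs⟩ := by
    ext i
    simp [mixedCols]
  rw [hupd, hUV s, hnext, det_updateCol_smul_add_smul_col _ (by simp [Fin.ext_iff])]
  have hcur : U s = fun i => mixedCols U V (s + 1) i ⟨s, by omega⟩ := by
    ext i
    simp [mixedCols]
  rw [hcur, updateCol_eq_self]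

theorem det_eq_prod_mul_det_mixedCols (hUV : ∀ j, V j = c j • U j + d j • V (j + 1)) {s : ℕ}
    (hs : s < N) :
    det (of fun i j : Fin N => V j i) = (∏ j ∈ range s, c j) * det (mixedCols U V s) := by
  induction s with
  | zero => simp [mixedCols]
  | succ s ih =>
    rw [ih (by omega), det_mixedCols_eq_mul hUV hs, prod_range_succ, mul_assoc]

theorem det_updateCol_eq_mul_succ (hUV : ∀ j, V j = c j • U j + d j • V (j + 1))
    (A : Matrix (Fin N) (Fin N) R) {r p : Fin N} (hpr : p ≠ r) {s : ℕ}
    (hp : ∀ i, A i p = U s i) :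
    det (A.updateCol r (V s)) = d s * det (A.updateCol r (V (s + 1))) := by
  have hU : U s = fun i => A i p := funext fun i => (hp i).symm
  rw [hUV s, add_comm, hU, det_updateCol_smul_add_smul_col _ hpr.symm]

theorem det_updateCol_eq_prod_mul (hUV : ∀ j, V j = c j • U j + d j • V (j + 1))
    (A : Matrix (Fin N) (Fin N) R) (r : Fin N) {a b : ℕ} (hab : a ≤ b)
    (hp : ∀ s ∈ Ico a b, ∃ p ≠ r, ∀ i, A i p = U s i) :
    det (A.updateCol r (V a)) = (∏ s ∈ Ico a b, d s) * det (A.updateCol r (V b)) := by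
  induction b, hab using Nat.le_induction with
  | base => simp
  | succ b hab ih =>
    obtain ⟨p, hpr, hpU⟩ := hp b (by simp [hab])
    rw [ih (fun s hs => hp s (Ico_subset_Ico_right b.le_succ hs)),
      det_updateCol_eq_mul_succ hUV A hpr hpU, prod_Ico_succ_top hab, mul_assoc]

theorem det_cp2Matrix {M : ℕ} {U V : ℕ → Fin (M + 2) → R}
    (hUV : ∀ j, V j = c j • U j + d j • V (j + 1)) :
    det (cp2Matrix U V) = (∏ s ∈ Ico 1 (M + 1), -d s) * det (mixedCols U V (M + 1)) := by
  set X := mixedCols U V (M + 1)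
  have hcol : ∀ s ∈ Ico 1 (M + 1), ∃ p ≠ Fin.last (M + 1), ∀ i, X i p = U s i := by
    intro s hs
    have hs' : s < M + 1 := (mem_Ico.mp hs).2
    refine ⟨⟨s, hs'.trans (Nat.lt_succ_self _)⟩, by simp [Fin.ext_iff]; omega, fun i => ?_⟩
    simp only [X, mixedCols, of_apply, if_pos hs']
  have hlast : V (M + 1) = fun i => X i (Fin.last (M + 1)) := by
    ext i
    simp [X, mixedCols]
  have hperm := det_permute' (Fin.cycleIcc 1 (Fin.last (M + 1))) (cp2Matrix U V)
  rw [cp2Matrix_submatrix_cycleIcc, det_updateCol_eq_prod_mul hUV X _ (by omega) hcol, hlast,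
    updateCol_eq_self, Fin.sign_cycleIcc_of_le (Fin.le_last _)] at hperm
  have hsq : ((-1 : R) ^ M) * (-1) ^ M = 1 := by rw [← mul_pow]; simp
  norm_num at hperm
  rw [prod_neg, Nat.card_Ico, Nat.add_sub_cancel]
  linear_combination (-(-1 : R) ^ M) * hperm - (cp2Matrix U V).det * hsq

end ContiguousColumns

theorem prod_range_zpow_sub_mul {K : Type*} [Field K] {q : K} (hq : q ≠ 0) (m : ℤ) (b : K)
    (k : ℕ) : ∏ j ∈ range k, q ^ (m - j) * b = q ^ (k * (2 * m - k + 1) / 2) * b ^ k := by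
  induction k with
  | zero => simp
  | succ k ih =>
    have hexp : ((k + 1 : ℕ) : ℤ) * (2 * m - (k + 1 : ℕ) + 1) / 2 =
        k * (2 * m - k + 1) / 2 + (m - k) := by
      rw [← Int.add_mul_ediv_right _ _ two_ne_zero]
      push_cast
      ring_nf
    rw [prod_range_succ, ih, hexp, zpow_add₀ hq, pow_succ]
    ring

noncomputable def psiCol (q : ℂ) (ψ : ℂ → ℂ → ℂ → ℂ) (m n : ℤ) (t b1 b3 : ℂ) {N : ℕ} (j : ℕ)
    (i : Fin N) : ℂ :=
  ψ t (q ^ (m - j) * b1) (q ^ (n + i) * b3)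

section Psi

variable {q : ℂ} {ψ : ℂ → ℂ → ℂ → ℂ} {m n : ℤ} {t b1 b3 : ℂ} {N : ℕ}

theorem psiCol_eq_smul_add_smul (hq : q ≠ 0)
    (hre1 : ∀ t b1 b3 : ℂ, t ≠ 0 → b1 ≠ 0 → b3 ≠ 0 →
      ψ (q * t) b1 b3 = b1 * ψ t b1 b3 + (1 - b1) * ψ (q * t) (b1 / q) b3)
    (ht : t ≠ 0) (hb1 : b1 ≠ 0) (hb3 : b3 ≠ 0) (j : ℕ) :
    psiCol q ψ m n t b1 b3 (N := N) j =
      (q ^ (m - j) * b1) • psiCol q ψ m n (t / q) b1 b3 j +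
        (1 - q ^ (m - j) * b1) • psiCol q ψ m n t b1 b3 (j + 1) := by
  ext i
  have h := hre1 (t / q) (q ^ (m - j) * b1) (q ^ (n + i) * b3) (div_ne_zero ht hq)
    (mul_ne_zero (zpow_ne_zero _ hq) hb1) (mul_ne_zero (zpow_ne_zero _ hq) hb3)
  have hdiv : q ^ (m - j) * b1 / q = q ^ (m - (j + 1 : ℕ)) * b1 := by
    rw [Nat.cast_succ, ← sub_sub, zpow_sub_one₀ hq]
    ring
  rw [mul_div_cancel₀ t hq, hdiv] at h
  simpa [psiCol] using h

theorem tau_eq_det_psiCol (hq : q ≠ 0) :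
    tau q ψ N t (q ^ m * b1) (q ^ n * b3) =
      det (of fun i j : Fin N => psiCol q ψ m n t b1 b3 j i) := by
  unfold tau psiCol
  congr 1
  ext i j
  simp only [of_apply, ← mul_assoc, ← zpow_add₀ hq]
  ring_nf

end Psi

theorem difference_formula_cp2_general (q : ℂ) (hq : q ≠ 0) (ψ : ℂ → ℂ → ℂ → ℂ)
    (hre1 : ∀ t b1 b3 : ℂ, t ≠ 0 → b1 ≠ 0 → b3 ≠ 0 →
      ψ (q * t) b1 b3 = b1 * ψ t b1 b3 + (1 - b1) * ψ (q * t) (b1 / q) b3)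
    (m n : ℤ) (N : ℕ) (hN : 2 ≤ N)
    (t b1 b3 : ℂ) (ht : t ≠ 0) (hb1 : b1 ≠ 0) (hb3 : b3 ≠ 0) :
    Matrix.det (Matrix.of fun i j : Fin N =>
        if (j : ℕ) = 0 then ψ (t / q) (q ^ m * b1) (q ^ (n + (i : ℤ)) * b3)
        else if (j : ℕ) = 1 then ψ t (q ^ (m - 1) * b1) (q ^ (n + (i : ℤ)) * b3)
        else ψ (t / q) (q ^ (m - (j : ℤ) + 1) * b1) (q ^ (n + (i : ℤ)) * b3)) =
      (∏ k ∈ Finset.Icc 1 (N - 2), (q ^ (m - (k : ℤ)) * b1 - 1)) /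
          (q ^ ((((N : ℤ) - 1) * (2 * m - (N : ℤ) + 2)) / 2) * b1 ^ (N - 1)) *
        tau q ψ N t (q ^ m * b1) (q ^ n * b3) := by
  obtain ⟨M, rfl⟩ := Nat.exists_eq_add_of_le' hN
  have hUV := psiCol_eq_smul_add_smul (N := M + 2) (m := m) (n := n) hq hre1 ht hb1 hb3
  have hexp : ((M + 2 : ℕ) - 1 : ℤ) * (2 * m - (M + 2 : ℕ) + 2) / 2 =
      ((M + 1 : ℕ) : ℤ) * (2 * m - (M + 1 : ℕ) + 1) / 2 := by
    push_cast; ring_nf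
  calc _ = det (cp2Matrix (psiCol q ψ m n (t / q) b1 b3) (psiCol q ψ m n t b1 b3)) := by
        congr 1
        ext i j
        simp only [cp2Matrix, psiCol, of_apply]
        split_ifs
        · simp
        · simp
        · rw [Nat.cast_sub (by omega), Nat.cast_one, sub_add_eq_add_sub, sub_sub_eq_add_sub]
    _ = _ := by
        rw [det_cp2Matrix hUV, tau_eq_det_psiCol hq,
          det_eq_prod_mul_det_mixedCols hUV (s := M + 1) (by omega), prod_range_zpow_sub_mul hq,
          Nat.add_sub_cancel, show M + 2 - 1 = M + 1 by omega, hexp, ← Ico_add_one_right_eq_Icc]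
        simp only [neg_sub]
        rw [div_mul_eq_mul_div, eq_div_iff (by positivity)]
        ring

theorem difference_formula_cp2 (q : ℂ) (hq : q ≠ 0) (ψ : ℂ → ℂ → ℂ → ℂ)
    (hre1 : ∀ t b1 b3 : ℂ, t ≠ 0 → b1 ≠ 0 → b3 ≠ 0 →
      ψ (q * t) b1 b3 = b1 * ψ t b1 b3 + (1 - b1) * ψ (q * t) (b1 / q) b3)
    (m n : ℤ) (N : ℕ) (hN : 2 ≤ N)
    (t b1 b3 : ℂ) (ht : t ≠ 0) (hb1 : b1 ≠ 0) (hb3 : b3 ≠ 0)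
    (hgen : ∀ k : ℕ, 1 ≤ k → (k : ℤ) ≤ (N : ℤ) - 2 → q ^ (m - k) * b1 ≠ 1) :
    Matrix.det (Matrix.of fun i j : Fin N =>
        if (j : ℕ) = 0 then ψ (t / q) (q ^ m * b1) (q ^ (n + (i : ℤ)) * b3)
        else if (j : ℕ) = 1 then ψ t (q ^ (m - 1) * b1) (q ^ (n + (i : ℤ)) * b3)
        else ψ (t / q) (q ^ (m - (j : ℤ) + 1) * b1) (q ^ (n + (i : ℤ)) * b3)) =
      (∏ k ∈ Finset.Icc 1 (N - 2), (q ^ (m - (k : ℤ)) * b1 - 1)) /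
          (q ^ ((((N : ℤ) - 1) * (2 * m - (N : ℤ) + 2)) / 2) * b1 ^ (N - 1)) *
        tau q ψ N t (q ^ m * b1) (q ^ n * b3) :=
  difference_formula_cp2_general q hq ψ hre1 m n N hN t b1 b3 ht hb1 hb3
end

section
/- (Alternative determinant expression, Lemma A.1 (det4).) Suppose ψ satisfies the contiguous relation (re1). Fix integers m, n, an integer N ≥ 1, and nonzero t, b₁, b₃ ∈ ℂ with q^{m−k+1}·b₁ ≠ 1 for k = 1, …, N−1. Then τ_N^{m,n}(t) = ∏_{k=1}^{N−1} (q^{m−k+1}·b₁/(q^{m−k+1}·b₁ − 1))^{N−k} · det(ψ(q^{1−i}·t, qᵐ·b₁, q^{n+j−1}·b₃))_{i,j=1,…,N}. -/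
open Finset Polynomial

section QShift

variable {K : Type*} [Field K]

noncomputable def qShift (q : K) : Module.End K (K → K) :=
  LinearMap.funLeft K K (q⁻¹ * ·)

theorem qShift_apply (q : K) (g : K → K) (t : K) : qShift q g t = g (q⁻¹ * t) := rfl

theorem qShift_pow_apply (q : K) (r : ℕ) (g : K → K) (t : K) :
    (qShift q ^ r) g t = g (q⁻¹ ^ r * t) := by
  induction r generalizing t with
  | zero => simp
  | succ r ih =>
    rw [pow_succ', Module.End.mul_apply, qShift_apply, ih, pow_succ, mul_assoc]

theorem aeval_qShift_apply (q : K) {P : K[X]} {n : ℕ} (hP : P.natDegree < n) (g : K → K) (t : K) :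
    aeval (qShift q) P g t = ∑ r ∈ range n, P.coeff r * g (q⁻¹ ^ r * t) := by
  simp [aeval_eq_sum_range' hP, LinearMap.sum_apply, qShift_pow_apply]

noncomputable def lowering (q b : K) (i : ℕ) : K[X] :=
  ∏ s ∈ range i, (C (q⁻¹ ^ s * b) * X - 1) * C (q⁻¹ ^ s * b - 1)⁻¹

theorem natDegree_lowering_factor_le (β c : K) : ((C β * X - 1) * C c).natDegree ≤ 1 := by
  compute_degree

theorem natDegree_lowering_le (q b : K) (i : ℕ) : (lowering q b i).natDegree ≤ i := by
  rw [lowering]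
  refine (natDegree_prod_le _ _).trans
    ((sum_le_card_nsmul _ _ 1 fun s _ => natDegree_lowering_factor_le _ _).trans ?_)
  simp

theorem coeff_lowering_self (q b : K) (i : ℕ) :
    (lowering q b i).coeff i = ∏ s ∈ range i, q⁻¹ ^ s * b / (q⁻¹ ^ s * b - 1) := by
  have h := coeff_prod_of_natDegree_le (s := range i) _ 1
    fun s _ => natDegree_lowering_factor_le (q⁻¹ ^ s * b) (q⁻¹ ^ s * b - 1)⁻¹
  rw [card_range, mul_one] at h
  rw [lowering, h]
  refine prod_congr rfl fun s _ => ?_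
  simp [coeff_mul_C, coeff_one, div_eq_mul_inv]

theorem aeval_qShift_lowering_factor_apply (q β c : K) (h : K → K) (t : K) :
    aeval (qShift q) ((C β * X - 1) * C c) h t = (β * h (q⁻¹ * t) - h t) * c := by
  simp only [map_mul, map_sub, aeval_C, aeval_X, map_one, Module.End.mul_apply,
    LinearMap.sub_apply, Module.algebraMap_end_apply, Module.End.one_apply, Pi.sub_apply,
    Pi.smul_apply, qShift_apply, smul_eq_mul]
  ring

section Expansion

variable {q : K} {ψ : K → K → K → K}

variable (hq : q ≠ 0)
  (hre1 : ∀ t b1 b3 : K, t ≠ 0 → b1 ≠ 0 → b3 ≠ 0 →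
    ψ (q * t) b1 b3 = b1 * ψ t b1 b3 + (1 - b1) * ψ (q * t) (b1 / q) b3)
include hq hre1

theorem psi_div_eq {t β d : K} (ht : t ≠ 0) (hβ : β ≠ 0) (hd : d ≠ 0) (hβ1 : β ≠ 1) :
    ψ t (β / q) d = (β * ψ (q⁻¹ * t) β d - ψ t β d) * (β - 1)⁻¹ := by
  have h := hre1 (q⁻¹ * t) β d (mul_ne_zero (inv_ne_zero hq) ht) hβ hd
  rw [mul_inv_cancel_left₀ hq] at h
  rw [eq_mul_inv_iff_mul_eq₀ (sub_ne_zero.2 hβ1)]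
  linear_combination h

theorem psi_eq_aeval_lowering {b d : K} (hb : b ≠ 0) (hd : d ≠ 0) {i : ℕ}
    (hgen : ∀ s < i, q⁻¹ ^ s * b ≠ 1) {t : K} (ht : t ≠ 0) :
    ψ t (q⁻¹ ^ i * b) d = aeval (qShift q) (lowering q b i) (fun t => ψ t b d) t := by
  induction i generalizing t with
  | zero => simp [lowering]
  | succ i ih =>
    have hgen' : ∀ s < i, q⁻¹ ^ s * b ≠ 1 := fun s hs => hgen s (by omega)
    have hβ : q⁻¹ ^ i * b ≠ 0 := mul_ne_zero (pow_ne_zero _ (inv_ne_zero hq)) hb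
    rw [lowering, prod_range_succ, ← lowering, mul_comm (lowering q b i), map_mul,
      Module.End.mul_apply, aeval_qShift_lowering_factor_apply, ← ih hgen' ht,
      ← ih hgen' (mul_ne_zero (inv_ne_zero hq) ht), pow_succ, mul_right_comm, ← div_eq_mul_inv,
      psi_div_eq hq hre1 ht hβ hd (hgen i i.lt_succ_self)]

end Expansion

end QShift

theorem Finset.prod_range_prod_range_succ_eq_prod_Icc_pow {M : Type*} [CommMonoid M]
    (g : ℕ → M) (N : ℕ) :
    ∏ i ∈ range N, ∏ s ∈ range i, g (s + 1) = ∏ k ∈ Icc 1 (N - 1), g k ^ (N - k) := by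
  have hinner : ∀ i, ∏ s ∈ range i, g (s + 1) = ∏ k ∈ Ico 1 (i + 1), g k := fun i => by
    rw [prod_Ico_eq_prod_range, Nat.add_sub_cancel]
    simp only [add_comm]
  simp only [hinner]
  rw [prod_comm' (t' := Icc 1 (N - 1)) (s' := fun k => Ico k N) fun i k => by
    simp only [mem_range, mem_Ico, mem_Icc]; omega]
  simp

theorem tau_eq_prod_mul_det {q : ℂ} (hq : q ≠ 0) {ψ : ℂ → ℂ → ℂ → ℂ}
    (hre1 : ∀ t b1 b3 : ℂ, t ≠ 0 → b1 ≠ 0 → b3 ≠ 0 →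
      ψ (q * t) b1 b3 = b1 * ψ t b1 b3 + (1 - b1) * ψ (q * t) (b1 / q) b3)
    {N : ℕ} {t b d : ℂ} (ht : t ≠ 0) (hb : b ≠ 0) (hd : d ≠ 0)
    (hgen : ∀ s, s + 1 < N → q⁻¹ ^ s * b ≠ 1) :
    tau q ψ N t b d =
      (∏ i ∈ range N, ∏ s ∈ range i, q⁻¹ ^ s * b / (q⁻¹ ^ s * b - 1)) *
        (Matrix.of fun r j : Fin N => ψ (q⁻¹ ^ (r : ℕ) * t) b (q ^ (j : ℤ) * d)).det := by
  set L : Matrix (Fin N) (Fin N) ℂ := .of fun i r => (lowering q b i).coeff r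
  have hL : L.IsLowerTriangular := fun i r h =>
    coeff_eq_zero_of_natDegree_lt ((natDegree_lowering_le q b i).trans_lt h)
  have hLB : Matrix.transpose (.of fun i j : Fin N => ψ t (q ^ (-(j : ℤ)) * b) (q ^ (i : ℤ) * d)) =
      L * .of fun r j : Fin N => ψ (q⁻¹ ^ (r : ℕ) * t) b (q ^ (j : ℤ) * d) := by
    ext i j
    have hdj : q ^ (j : ℤ) * d ≠ 0 := mul_ne_zero (zpow_ne_zero _ hq) hd
    rw [Matrix.transpose_apply, Matrix.of_apply, zpow_neg, zpow_natCast, ← inv_pow,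
      psi_eq_aeval_lowering hq hre1 hb hdj (fun s hs => hgen s (by omega)) ht,
      aeval_qShift_apply q ((natDegree_lowering_le q b i).trans_lt i.isLt), Matrix.mul_apply,
      ← Fin.sum_univ_eq_sum_range (fun r => (lowering q b i).coeff r * _)]
    rfl
  rw [tau, ← Matrix.det_transpose, hLB, Matrix.det_mul, Matrix.det_of_isLowerTriangular _ hL]
  simp only [L, Matrix.of_apply, coeff_lowering_self,
    Fin.prod_univ_eq_prod_range fun i => ∏ s ∈ range i, q⁻¹ ^ s * b / (q⁻¹ ^ s * b - 1)]

theorem alt_det_expression_det4_general (q : ℂ) (hq : q ≠ 0) (ψ : ℂ → ℂ → ℂ → ℂ)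
    (hre1 : ∀ t b1 b3 : ℂ, t ≠ 0 → b1 ≠ 0 → b3 ≠ 0 →
      ψ (q * t) b1 b3 = b1 * ψ t b1 b3 + (1 - b1) * ψ (q * t) (b1 / q) b3)
    (m n : ℤ) (N : ℕ)
    (t b1 b3 : ℂ) (ht : t ≠ 0) (hb1 : b1 ≠ 0) (hb3 : b3 ≠ 0)
    (hgen : ∀ k : ℕ, 1 ≤ k → k ≤ N - 1 → q ^ (m - (k : ℤ) + 1) * b1 ≠ 1) :
    tau q ψ N t (q ^ m * b1) (q ^ n * b3) =
      (∏ k ∈ Finset.Icc 1 (N - 1),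
          (q ^ (m - (k : ℤ) + 1) * b1 / (q ^ (m - (k : ℤ) + 1) * b1 - 1)) ^ (N - k)) *
        Matrix.det (Matrix.of fun i j : Fin N =>
          ψ (q ^ (-(i : ℤ)) * t) (q ^ m * b1) (q ^ (n + (j : ℤ)) * b3)) := by
  have hβ : ∀ s : ℕ, q⁻¹ ^ s * (q ^ m * b1) = q ^ (m - ((s + 1 : ℕ) : ℤ) + 1) * b1 := fun s => by
    rw [← zpow_natCast, inv_zpow', ← mul_assoc, ← zpow_add₀ hq]
    push_cast
    ring_nf
  rw [tau_eq_prod_mul_det hq hre1 ht (mul_ne_zero (zpow_ne_zero _ hq) hb1)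
    (mul_ne_zero (zpow_ne_zero _ hq) hb3) fun s hs => by
      rw [hβ]; exact hgen (s + 1) (by omega) (by omega)]
  simp only [hβ]
  rw [prod_range_prod_range_succ_eq_prod_Icc_pow
    (fun k : ℕ => q ^ (m - (k : ℤ) + 1) * b1 / (q ^ (m - (k : ℤ) + 1) * b1 - 1))]
  congr 2
  ext i j
  simp only [Matrix.of_apply, zpow_neg, zpow_natCast, inv_pow, zpow_add₀ hq]
  congr 1
  ring

theorem alt_det_expression_det4 (q : ℂ) (hq : q ≠ 0) (ψ : ℂ → ℂ → ℂ → ℂ)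
    (hre1 : ∀ t b1 b3 : ℂ, t ≠ 0 → b1 ≠ 0 → b3 ≠ 0 →
      ψ (q * t) b1 b3 = b1 * ψ t b1 b3 + (1 - b1) * ψ (q * t) (b1 / q) b3)
    (m n : ℤ) (N : ℕ) (hN : 1 ≤ N)
    (t b1 b3 : ℂ) (ht : t ≠ 0) (hb1 : b1 ≠ 0) (hb3 : b3 ≠ 0)
    (hgen : ∀ k : ℕ, 1 ≤ k → k ≤ N - 1 → q ^ (m - (k : ℤ) + 1) * b1 ≠ 1) :
    tau q ψ N t (q ^ m * b1) (q ^ n * b3) =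
      (∏ k ∈ Finset.Icc 1 (N - 1),
          (q ^ (m - (k : ℤ) + 1) * b1 / (q ^ (m - (k : ℤ) + 1) * b1 - 1)) ^ (N - k)) *
        Matrix.det (Matrix.of fun i j : Fin N =>
          ψ (q ^ (-(i : ℤ)) * t) (q ^ m * b1) (q ^ (n + (j : ℤ)) * b3)) :=
  alt_det_expression_det4_general q hq ψ hre1 m n N t b1 b3 ht hb1 hb3 hgen
end

section
/- (Alternative determinant expression, Lemma A.1 (det5).) Suppose ψ satisfies the contiguous relations (re1) and (re2). Fix integers m, n, an integer N ≥ 1, and nonzero t, b₁, b₃ ∈ ℂ with q^{m−k+1}·b₁ ≠ 1 and q^{n+k−1}·b₃ ≠ 1 for k = 1, …, N−1. Then τ_N^{m,n}(t) = (−1)^{N(N−1)/2} · ∏_{k=1}^{N−1} (q^{n+k−1}·b₃)^{N−k} · ∏_{k=1}^{N−1} (q^{m−k+1}·b₁/(q^{m−k+1}·b₁ − 1))^{N−k} · det(ψ(q^{i−j}·t, qᵐ·b₁, q^{n+j−1}·b₃))_{i,j=1,…,N}. -/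
/-!
Solving (re2) for `ψ(t, b₁, q b₃)` and (re1) for `ψ(q t, b₁/q, b₃)` gives two-term recurrences
whose second term shifts `t` by `q^{±1}`. Iterating them expresses every entry of both
determinants through the single sequence `G a = ψ(q^a t, q^m b₁, q^n b₃)`: after `c` steps the
coefficients are those of a product of `c` linear polynomials acting on `G` through the shift
`a ↦ a ± 1`. Hence the matrix of `τ_N^{m,n}` is `Aᵀ T B` and the matrix on the right is `T V`,
where `T = (G (k - l))` and `A`, `B`, `V` are upper triangular coefficient matrices. Their
diagonals are the leading coefficients of those products, and comparing them produces the
prefactor.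
-/

open Finset Polynomial

namespace Polynomial

variable {R : Type*} [CommRing R]

noncomputable def linearFactorProd (x y : ℕ → R) (c : ℕ) : R[X] :=
  ∏ s ∈ range c, (C (y s) * X + C (x s))

variable (x y : ℕ → R)

theorem natDegree_linearFactorProd_le (c : ℕ) : (linearFactorProd x y c).natDegree ≤ c :=
  (natDegree_prod_le _ _).trans <|
    (sum_le_card_nsmul _ _ 1 fun _ _ => natDegree_linear_le).trans_eq (by simp)

theorem coeff_linearFactorProd_of_lt {c k : ℕ} (h : c < k) :
    (linearFactorProd x y c).coeff k = 0 :=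
  coeff_eq_zero_of_natDegree_lt ((natDegree_linearFactorProd_le x y c).trans_lt h)

theorem coeff_linearFactorProd_self (c : ℕ) :
    (linearFactorProd x y c).coeff c = ∏ s ∈ range c, y s := by
  have := coeff_prod_of_natDegree_le (range c) (fun s => C (y s) * X + C (x s)) 1
    fun _ _ => natDegree_linear_le
  simpa [linearFactorProd] using this

end Polynomial

section Shift

variable (R : Type*) [CommRing R]

noncomputable def shiftBy (d : ℤ) : Module.End R (ℤ → R) :=
  LinearMap.funLeft R R (· + d)

variable {R}

theorem shiftBy_apply (d : ℤ) (f : ℤ → R) (a : ℤ) : shiftBy R d f a = f (a + d) := rfl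

theorem shiftBy_pow_apply (d : ℤ) (k : ℕ) (f : ℤ → R) (a : ℤ) :
    (shiftBy R d ^ k) f a = f (a + k * d) := by
  induction k generalizing a with
  | zero => simp
  | succ k ih =>
    rw [pow_succ', Module.End.mul_apply, shiftBy_apply, ih]
    congr 1
    push_cast
    ring

theorem aeval_shiftBy_apply (d : ℤ) {p : R[X]} {M : ℕ} (hp : p.natDegree < M) (f : ℤ → R)
    (a : ℤ) :
    aeval (shiftBy R d) p f a = ∑ k ∈ range M, p.coeff k * f (a + k * d) := by
  simp [aeval_eq_sum_range' hp, Finset.sum_apply, shiftBy_pow_apply]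

theorem eq_aeval_linearFactorProd_of_recurrence (x y : ℕ → R) (d : ℤ) (H : ℕ → ℤ → R) {L : ℕ}
    (hrec : ∀ c < L, ∀ a, H (c + 1) a = x c * H c a + y c * H c (a + d)) :
    ∀ c ≤ L, H c = aeval (shiftBy R d) (linearFactorProd x y c) (H 0) := by
  intro c hc
  induction c with
  | zero => simp [linearFactorProd]
  | succ c ih =>
    have step : H (c + 1) = aeval (shiftBy R d) (C (y c) * X + C (x c)) (H c) := by
      ext a
      simp [hrec c hc, shiftBy, Module.algebraMap_end_apply]
      ring
    rw [step, ih (by omega), ← Module.End.mul_apply, ← map_mul, linearFactorProd,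
      linearFactorProd, prod_range_succ, mul_comm]

end Shift

section CoeffMatrix

variable {R : Type*} [CommRing R]

noncomputable def coeffMatrix (x y : ℕ → R) (N : ℕ) : Matrix (Fin N) (Fin N) R :=
  Matrix.of fun k c => (linearFactorProd x y c).coeff k

theorem eq_sum_coeffMatrix_of_recurrence (x y : ℕ → R) (d : ℤ) (H : ℕ → ℤ → R) {N : ℕ}
    (hrec : ∀ c, c + 1 < N → ∀ a, H (c + 1) a = x c * H c a + y c * H c (a + d))
    (c : Fin N) (a : ℤ) :
    H c a = ∑ k : Fin N, coeffMatrix x y N k c * H 0 (a + k * d) := by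
  rw [eq_aeval_linearFactorProd_of_recurrence x y d H (L := N - 1)
      (fun c hc => hrec c (by omega)) c (by omega),
    aeval_shiftBy_apply d ((natDegree_linearFactorProd_le x y c).trans_lt c.isLt)]
  exact (Fin.sum_univ_eq_sum_range (fun k => _ * H 0 (a + k * d)) N).symm

theorem prod_range_prod_range_eq_prod_pow {M : Type*} [CommMonoid M] (f : ℕ → M) (N : ℕ) :
    ∏ c ∈ range N, ∏ s ∈ range c, f s = ∏ s ∈ range N, f s ^ (N - 1 - s) := by
  induction N with
  | zero => simp
  | succ N ih =>
    rw [prod_range_succ, ih, prod_range_succ _ N, Nat.add_sub_cancel, Nat.sub_self, pow_zero,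
      mul_one, ← prod_mul_distrib]
    refine prod_congr rfl fun s hs => ?_
    rw [← pow_succ]
    congr 1
    have := mem_range.mp hs
    omega

theorem det_coeffMatrix (x y : ℕ → R) (N : ℕ) :
    (coeffMatrix x y N).det = ∏ s ∈ range N, y s ^ (N - 1 - s) := by
  have htri : (coeffMatrix x y N).IsUpperTriangular := fun _ c h =>
    coeff_linearFactorProd_of_lt x y (c := c) h
  rw [Matrix.det_of_isUpperTriangular htri, ← prod_range_prod_range_eq_prod_pow]
  simp only [coeffMatrix, Matrix.of_apply, coeff_linearFactorProd_self]
  exact Fin.prod_univ_eq_prod_range (fun c => ∏ s ∈ range c, y s) N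

end CoeffMatrix

section Contiguous

variable {K : Type*} [Field K]

def oneSubInv (z : ℕ → K) (s : ℕ) : K := (1 - z s)⁻¹

def divSubOne (z : ℕ → K) (s : ℕ) : K := z s / (z s - 1)

theorem zpow_mul_ne_zero {q : K} (hq : q ≠ 0) (e : ℤ) {z : K} (hz : z ≠ 0) : q ^ e * z ≠ 0 :=
  mul_ne_zero (zpow_ne_zero e hq) hz

theorem zpow_add_one_mul {q : K} (hq : q ≠ 0) (e : ℤ) (z : K) :
    q ^ (e + 1) * z = q * (q ^ e * z) := by
  rw [zpow_add_one₀ hq]; ring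


def ContiguousB1 (q : ℂ) (ψ : ℂ → ℂ → ℂ → ℂ) : Prop :=
  ∀ t b1 b3 : ℂ, t ≠ 0 → b1 ≠ 0 → b3 ≠ 0 →
    ψ (q * t) b1 b3 = b1 * ψ t b1 b3 + (1 - b1) * ψ (q * t) (b1 / q) b3

def ContiguousB3 (q : ℂ) (ψ : ℂ → ℂ → ℂ → ℂ) : Prop :=
  ∀ t b1 b3 : ℂ, t ≠ 0 → b1 ≠ 0 → b3 ≠ 0 →
    b3 * ψ (q * t) b1 b3 = ψ t b1 b3 + (b3 - 1) * ψ t b1 (q * b3)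

variable {q : ℂ} {ψ : ℂ → ℂ → ℂ → ℂ}

theorem ContiguousB3.apply_mul_right (hre2 : ContiguousB3 q ψ) {t b1 b3 : ℂ} (ht : t ≠ 0)
    (hb1 : b1 ≠ 0) (hb3 : b3 ≠ 0) (h : b3 ≠ 1) :
    ψ t b1 (q * b3) = (1 - b3)⁻¹ * ψ t b1 b3 + b3 / (b3 - 1) * ψ (q * t) b1 b3 := by
  have h₁ : b3 - 1 ≠ 0 := sub_ne_zero.mpr h
  have h₂ : 1 - b3 ≠ 0 := sub_ne_zero.mpr h.symm
  field_simp
  linear_combination (b3 - 1) * hre2 t b1 b3 ht hb1 hb3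

theorem ContiguousB1.apply_div (hre1 : ContiguousB1 q ψ) {t b1 b3 : ℂ} (ht : t ≠ 0)
    (hb1 : b1 ≠ 0) (hb3 : b3 ≠ 0) (h : b1 ≠ 1) :
    ψ (q * t) (b1 / q) b3 = (1 - b1)⁻¹ * ψ (q * t) b1 b3 + b1 / (b1 - 1) * ψ t b1 b3 := by
  have h₁ : b1 - 1 ≠ 0 := sub_ne_zero.mpr h
  have h₂ : 1 - b1 ≠ 0 := sub_ne_zero.mpr h.symm
  field_simp
  linear_combination (1 - b1) * hre1 t b1 b3 ht hb1 hb3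

end Contiguous

section Expansion

variable {q : ℂ} {ψ : ℂ → ℂ → ℂ → ℂ} {t b1 b3 : ℂ} {m n : ℤ} {N : ℕ}

theorem ContiguousB3.eq_sum_coeffMatrix (hq : q ≠ 0)
    (hre2 : ContiguousB3 q ψ) (ht : t ≠ 0) (hb1 : b1 ≠ 0) (hb3 : b3 ≠ 0)
    (hgen : ∀ c : ℕ, c + 1 < N → q ^ (n + c) * b3 ≠ 1) (e : ℤ) (i : Fin N) (a : ℤ) :
    ψ (q ^ a * t) (q ^ e * b1) (q ^ (n + i) * b3) =
      ∑ k : Fin N, coeffMatrix (oneSubInv fun c => q ^ (n + c) * b3)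
        (divSubOne fun c => q ^ (n + c) * b3) N k i *
          ψ (q ^ (a + k) * t) (q ^ e * b1) (q ^ n * b3) := by
  have hrec : ∀ c : ℕ, c + 1 < N → ∀ a : ℤ,
      ψ (q ^ a * t) (q ^ e * b1) (q ^ (n + (c + 1 : ℕ)) * b3) =
        oneSubInv (fun c => q ^ (n + c) * b3) c * ψ (q ^ a * t) (q ^ e * b1) (q ^ (n + c) * b3) +
        divSubOne (fun c => q ^ (n + c) * b3) c *
          ψ (q ^ (a + 1) * t) (q ^ e * b1) (q ^ (n + c) * b3) := by
    intro c hc a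
    rw [Nat.cast_succ, ← add_assoc, zpow_add_one_mul hq, zpow_add_one_mul hq,
      hre2.apply_mul_right (zpow_mul_ne_zero hq _ ht) (zpow_mul_ne_zero hq _ hb1)
        (zpow_mul_ne_zero hq _ hb3) (hgen c hc)]
    rfl
  simpa using eq_sum_coeffMatrix_of_recurrence _ _ 1
    (fun c a => ψ (q ^ a * t) (q ^ e * b1) (q ^ (n + c) * b3)) hrec i a

theorem ContiguousB1.eq_sum_coeffMatrix (hq : q ≠ 0)
    (hre1 : ContiguousB1 q ψ) (ht : t ≠ 0) (hb1 : b1 ≠ 0) (hb3 : b3 ≠ 0)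
    (hgen : ∀ c : ℕ, c + 1 < N → q ^ (m - c) * b1 ≠ 1) (j : Fin N) (a : ℤ) :
    ψ (q ^ a * t) (q ^ (m - j) * b1) (q ^ n * b3) =
      ∑ l : Fin N, coeffMatrix (oneSubInv fun c => q ^ (m - c) * b1)
        (divSubOne fun c => q ^ (m - c) * b1) N l j *
          ψ (q ^ (a - l) * t) (q ^ m * b1) (q ^ n * b3) := by
  have hrec : ∀ c : ℕ, c + 1 < N → ∀ a : ℤ,
      ψ (q ^ a * t) (q ^ (m - (c + 1 : ℕ)) * b1) (q ^ n * b3) =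
        oneSubInv (fun c => q ^ (m - c) * b1) c * ψ (q ^ a * t) (q ^ (m - c) * b1) (q ^ n * b3) +
        divSubOne (fun c => q ^ (m - c) * b1) c *
          ψ (q ^ (a + -1) * t) (q ^ (m - c) * b1) (q ^ n * b3) := by
    intro c hc a
    have hb1' : q ^ (m - (c + 1 : ℕ)) * b1 = q ^ (m - c) * b1 / q := by
      rw [Nat.cast_succ, ← sub_sub, zpow_sub_one₀ hq]; ring
    rw [hb1', show a = a + -1 + 1 by ring, zpow_add_one_mul hq, add_neg_cancel_right,
      hre1.apply_div (zpow_mul_ne_zero hq _ ht) (zpow_mul_ne_zero hq _ hb1)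
        (zpow_mul_ne_zero hq _ hb3) (hgen c hc)]
    rfl
  simpa [sub_eq_add_neg] using eq_sum_coeffMatrix_of_recurrence _ _ (-1)
    (fun c a => ψ (q ^ a * t) (q ^ (m - c) * b1) (q ^ n * b3)) hrec j a

theorem ContiguousB3.eq_sum_coeffMatrix_diag (hq : q ≠ 0)
    (hre2 : ContiguousB3 q ψ) (ht : t ≠ 0) (hb1 : b1 ≠ 0) (hb3 : b3 ≠ 0)
    (hgen : ∀ c : ℕ, c + 1 < N → q ^ (n + c) * b3 ≠ 1) (i : Fin N) (a : ℤ) :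
    ψ (q ^ (a - i) * t) (q ^ m * b1) (q ^ (n + i) * b3) =
      ∑ r : Fin N, coeffMatrix (divSubOne fun c => q ^ (n + c) * b3)
        (oneSubInv fun c => q ^ (n + c) * b3) N r i *
          ψ (q ^ (a - r) * t) (q ^ m * b1) (q ^ n * b3) := by
  have hrec : ∀ c : ℕ, c + 1 < N → ∀ a : ℤ,
      ψ (q ^ (a - (c + 1 : ℕ)) * t) (q ^ m * b1) (q ^ (n + (c + 1 : ℕ)) * b3) =
        divSubOne (fun c => q ^ (n + c) * b3) c *
          ψ (q ^ (a - c) * t) (q ^ m * b1) (q ^ (n + c) * b3) +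
        oneSubInv (fun c => q ^ (n + c) * b3) c *
          ψ (q ^ (a + -1 - c) * t) (q ^ m * b1) (q ^ (n + c) * b3) := by
    intro c hc a
    rw [Nat.cast_succ, ← add_assoc, zpow_add_one_mul hq,
      hre2.apply_mul_right (zpow_mul_ne_zero hq _ ht) (zpow_mul_ne_zero hq _ hb1)
        (zpow_mul_ne_zero hq _ hb3) (hgen c hc),
      ← zpow_add_one_mul hq, show a - (c + 1) + 1 = a - c by ring,
      show a - (c + 1) = a + -1 - c by ring, add_comm]
    rfl
  simpa [sub_eq_add_neg] using eq_sum_coeffMatrix_of_recurrence _ _ (-1)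
    (fun c a => ψ (q ^ (a - c) * t) (q ^ m * b1) (q ^ (n + c) * b3)) hrec i a

end Expansion

section Determinants

variable {q : ℂ} {ψ : ℂ → ℂ → ℂ → ℂ} {t b1 b3 : ℂ} {m n : ℤ} {N : ℕ}

theorem tau_eq_det_mul (hq : q ≠ 0) (hre1 : ContiguousB1 q ψ) (hre2 : ContiguousB3 q ψ)
    (ht : t ≠ 0) (hb1 : b1 ≠ 0) (hb3 : b3 ≠ 0)
    (hgen1 : ∀ c : ℕ, c + 1 < N → q ^ (m - c) * b1 ≠ 1)
    (hgen3 : ∀ c : ℕ, c + 1 < N → q ^ (n + c) * b3 ≠ 1) :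
    tau q ψ N t (q ^ m * b1) (q ^ n * b3) =
      (coeffMatrix (oneSubInv fun c => q ^ (n + c) * b3)
        (divSubOne fun c => q ^ (n + c) * b3) N).det *
      (Matrix.of fun k l : Fin N => ψ (q ^ ((k : ℤ) - l) * t) (q ^ m * b1) (q ^ n * b3)).det *
      (coeffMatrix (oneSubInv fun c => q ^ (m - c) * b1)
        (divSubOne fun c => q ^ (m - c) * b1) N).det := by
  rw [tau, ← Matrix.det_transpose (coeffMatrix _ _ N), mul_assoc, ← Matrix.det_mul,
    ← Matrix.det_mul]
  congr 1
  ext i j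
  have hentry : ψ t (q ^ (-(j : ℤ)) * (q ^ m * b1)) (q ^ (i : ℤ) * (q ^ n * b3)) =
      ψ (q ^ (0 : ℤ) * t) (q ^ (m - j) * b1) (q ^ (n + i) * b3) := by
    simp only [zpow_zero, one_mul, ← mul_assoc, ← zpow_add₀ hq, neg_add_eq_sub, add_comm (i : ℤ)]
  simp only [Matrix.of_apply, Matrix.mul_apply, Matrix.transpose_apply, hentry,
    hre2.eq_sum_coeffMatrix hq ht hb1 hb3 hgen3, zero_add,
    hre1.eq_sum_coeffMatrix hq ht hb1 hb3 hgen1, mul_comm (coeffMatrix _ _ N _ j)]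

theorem det_psi_shifted_eq_det_mul (hq : q ≠ 0) (hre2 : ContiguousB3 q ψ)
    (ht : t ≠ 0) (hb1 : b1 ≠ 0) (hb3 : b3 ≠ 0)
    (hgen3 : ∀ c : ℕ, c + 1 < N → q ^ (n + c) * b3 ≠ 1) :
    (Matrix.of fun i j : Fin N =>
        ψ (q ^ ((i : ℤ) - (j : ℤ)) * t) (q ^ m * b1) (q ^ (n + (j : ℤ)) * b3)).det =
      (Matrix.of fun k l : Fin N => ψ (q ^ ((k : ℤ) - l) * t) (q ^ m * b1) (q ^ n * b3)).det *
      (coeffMatrix (divSubOne fun c => q ^ (n + c) * b3)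
        (oneSubInv fun c => q ^ (n + c) * b3) N).det := by
  rw [← Matrix.det_mul]
  congr 1
  ext i j
  simp only [Matrix.of_apply, Matrix.mul_apply, hre2.eq_sum_coeffMatrix_diag hq ht hb1 hb3 hgen3,
    mul_comm (coeffMatrix _ _ N _ j)]

end Determinants

section Scalars

theorem neg_one_pow_triangle_eq_prod {R : Type*} [CommMonoid R] [HasDistribNeg R] (N : ℕ) :
    (-1 : R) ^ (N * (N - 1) / 2) = ∏ s ∈ range N, (-1 : R) ^ (N - 1 - s) := by
  rw [prod_range_reflect (fun s => (-1 : R) ^ s), prod_pow_eq_pow_sum, sum_range_id]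

theorem prod_Icc_one_pow_eq_prod_range {M : Type*} [CommMonoid M] (f : ℕ → M) (N : ℕ) :
    ∏ k ∈ Icc 1 (N - 1), f k ^ (N - k) = ∏ s ∈ range N, f (s + 1) ^ (N - 1 - s) := by
  cases N with
  | zero => simp
  | succ N =>
    rw [Nat.add_sub_cancel, ← Ico_add_one_right_eq_Icc, prod_Ico_eq_prod_range,
      prod_range_succ, Nat.add_sub_cancel, Nat.sub_self, pow_zero, mul_one]
    refine prod_congr rfl fun s _ => ?_
    rw [add_comm 1 s]
    congr 1
    omega

theorem prod_divSubOne_pow {K : Type*} [Field K] (z : ℕ → K) (N : ℕ) :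
    ∏ s ∈ range N, divSubOne z s ^ (N - 1 - s) =
      (-1) ^ (N * (N - 1) / 2) * (∏ s ∈ range N, z s ^ (N - 1 - s)) *
        ∏ s ∈ range N, oneSubInv z s ^ (N - 1 - s) := by
  have h : ∀ s, divSubOne z s = -1 * z s * oneSubInv z s := fun s => by
    rw [divSubOne, oneSubInv, ← neg_sub, div_neg, div_eq_mul_inv]; ring
  simp only [h, mul_pow, prod_mul_distrib, neg_one_pow_triangle_eq_prod]

end Scalars

theorem alt_det_expression_det5_general (q : ℂ) (hq : q ≠ 0) (ψ : ℂ → ℂ → ℂ → ℂ)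
    (hre1 : ∀ t b1 b3 : ℂ, t ≠ 0 → b1 ≠ 0 → b3 ≠ 0 →
      ψ (q * t) b1 b3 = b1 * ψ t b1 b3 + (1 - b1) * ψ (q * t) (b1 / q) b3)
    (hre2 : ∀ t b1 b3 : ℂ, t ≠ 0 → b1 ≠ 0 → b3 ≠ 0 →
      b3 * ψ (q * t) b1 b3 = ψ t b1 b3 + (b3 - 1) * ψ t b1 (q * b3))
    (m n : ℤ) (N : ℕ)
    (t b1 b3 : ℂ) (ht : t ≠ 0) (hb1 : b1 ≠ 0) (hb3 : b3 ≠ 0)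
    (hgen1 : ∀ k : ℕ, 1 ≤ k → k ≤ N - 1 → q ^ (m - (k : ℤ) + 1) * b1 ≠ 1)
    (hgen3 : ∀ k : ℕ, 1 ≤ k → k ≤ N - 1 → q ^ (n + (k : ℤ) - 1) * b3 ≠ 1) :
    tau q ψ N t (q ^ m * b1) (q ^ n * b3) =
      (-1 : ℂ) ^ (N * (N - 1) / 2) *
        (∏ k ∈ Finset.Icc 1 (N - 1), (q ^ (n + (k : ℤ) - 1) * b3) ^ (N - k)) *
        (∏ k ∈ Finset.Icc 1 (N - 1),
          (q ^ (m - (k : ℤ) + 1) * b1 / (q ^ (m - (k : ℤ) + 1) * b1 - 1)) ^ (N - k)) *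
        Matrix.det (Matrix.of fun i j : Fin N =>
          ψ (q ^ ((i : ℤ) - (j : ℤ)) * t) (q ^ m * b1) (q ^ (n + (j : ℤ)) * b3)) := by
  have hgen1' : ∀ c : ℕ, c + 1 < N → q ^ (m - c) * b1 ≠ 1 := fun c hc => by
    convert hgen1 (c + 1) (by omega) (by omega) using 3; push_cast; ring
  have hgen3' : ∀ c : ℕ, c + 1 < N → q ^ (n + c) * b3 ≠ 1 := fun c hc => by
    convert hgen3 (c + 1) (by omega) (by omega) using 3; push_cast; ring
  rw [tau_eq_det_mul hq hre1 hre2 ht hb1 hb3 hgen1' hgen3',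
    det_psi_shifted_eq_det_mul hq hre2 ht hb1 hb3 hgen3', det_coeffMatrix, det_coeffMatrix,
    det_coeffMatrix, prod_divSubOne_pow, prod_Icc_one_pow_eq_prod_range,
    prod_Icc_one_pow_eq_prod_range]
  have e1 : ∀ s : ℕ, m - ((s + 1 : ℕ) : ℤ) + 1 = m - s := fun s => by push_cast; ring
  have e3 : ∀ s : ℕ, n + ((s + 1 : ℕ) : ℤ) - 1 = n + s := fun s => by push_cast; ring
  simp only [e1, e3, divSubOne]
  ring

theorem alt_det_expression_det5 (q : ℂ) (hq : q ≠ 0) (ψ : ℂ → ℂ → ℂ → ℂ)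
    (hre1 : ∀ t b1 b3 : ℂ, t ≠ 0 → b1 ≠ 0 → b3 ≠ 0 →
      ψ (q * t) b1 b3 = b1 * ψ t b1 b3 + (1 - b1) * ψ (q * t) (b1 / q) b3)
    (hre2 : ∀ t b1 b3 : ℂ, t ≠ 0 → b1 ≠ 0 → b3 ≠ 0 →
      b3 * ψ (q * t) b1 b3 = ψ t b1 b3 + (b3 - 1) * ψ t b1 (q * b3))
    (m n : ℤ) (N : ℕ) (hN : 1 ≤ N)
    (t b1 b3 : ℂ) (ht : t ≠ 0) (hb1 : b1 ≠ 0) (hb3 : b3 ≠ 0)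
    (hgen1 : ∀ k : ℕ, 1 ≤ k → k ≤ N - 1 → q ^ (m - (k : ℤ) + 1) * b1 ≠ 1)
    (hgen3 : ∀ k : ℕ, 1 ≤ k → k ≤ N - 1 → q ^ (n + (k : ℤ) - 1) * b3 ≠ 1) :
    tau q ψ N t (q ^ m * b1) (q ^ n * b3) =
      (-1 : ℂ) ^ (N * (N - 1) / 2) *
        (∏ k ∈ Finset.Icc 1 (N - 1), (q ^ (n + (k : ℤ) - 1) * b3) ^ (N - k)) *
        (∏ k ∈ Finset.Icc 1 (N - 1),
          (q ^ (m - (k : ℤ) + 1) * b1 / (q ^ (m - (k : ℤ) + 1) * b1 - 1)) ^ (N - k)) *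
        Matrix.det (Matrix.of fun i j : Fin N =>
          ψ (q ^ ((i : ℤ) - (j : ℤ)) * t) (q ^ m * b1) (q ^ (n + (j : ℤ)) * b3)) :=
  alt_det_expression_det5_general q hq ψ hre1 hre2 m n N t b1 b3 ht hb1 hb3 hgen1 hgen3
end
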